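/- arXiv:0706.3006 — 8 statements merged into one kernel-verified Lean document; each statement's English description precedes it below -/
import Mathlib

section
/- In a recollement of abelian categories, if L is an object of A with i^*L = 0 and i^!L = 0, then the kernel of the counit σ_L : j_! j^* L → L is isomorphic to i_* i^! j_! j^* L. -/
/-!
The kernel of `σ_L : j_! j^* L → L` is the kernel of the unit `j_! j^* L → j_* j^* j_! j^* L`,
which by the second exact sequence of the recollement is `i_* i^! j_! j^* L`.
Indeed `j^* σ_L` is an isomorphism, so a morphism killed by `σ_L` is killed by `j^*`, hence
by the unit of `j^* ⊣ j_*`; conversely `i_* i^! j_! j^* L → j_! j^* L → L` vanishes because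
`Hom(i_* X, L) ≅ Hom(X, i^! L) = 0`.
-/

open CategoryTheory CategoryTheory.Limits

universe v u₁ u₂ u₃

/-- A recollement of abelian categories: six additive functors
`i^* ⊣ i_* ⊣ i^!` and `j_! ⊣ j^* ⊣ j_*` satisfying the axioms (R1)-(R3)
(and the exact sequences of natural transformations (R5)). -/
structure Recollement (A₁ : Type u₁) (A : Type u₂) (A₂ : Type u₃)
    [Category.{v} A₁] [Category.{v} A] [Category.{v} A₂]
    [Abelian A₁] [Abelian A] [Abelian A₂] where
  /-- the functor `i^* : A ⥤ A'` -/
  iStar : A ⥤ A₁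
  /-- the functor `i_* : A' ⥤ A` -/
  iLow : A₁ ⥤ A
  /-- the functor `i^! : A ⥤ A'` -/
  iShriek : A ⥤ A₁
  /-- the functor `j_! : A'' ⥤ A` -/
  jShriek : A₂ ⥤ A
  /-- the functor `j^* : A ⥤ A''` -/
  jStar : A ⥤ A₂
  /-- the functor `j_* : A'' ⥤ A` -/
  jLow : A₂ ⥤ A
  iStar_additive : iStar.Additive
  iLow_additive : iLow.Additive
  iShriek_additive : iShriek.Additive
  jShriek_additive : jShriek.Additive
  jStar_additive : jStar.Additive
  jLow_additive : jLow.Additive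
  /-- `i^* ⊣ i_*` -/
  adj₁ : iStar ⊣ iLow
  /-- `i_* ⊣ i^!` -/
  adj₂ : iLow ⊣ iShriek
  /-- `j_! ⊣ j^*` -/
  adj₃ : jShriek ⊣ jStar
  /-- `j^* ⊣ j_*` -/
  adj₄ : jStar ⊣ jLow
  /-- the adjunction morphism `i^* i_* → Id` is an isomorphism -/
  counit₁_iso : IsIso adj₁.counit
  /-- the adjunction morphism `Id → i^! i_*` is an isomorphism -/
  unit₂_iso : IsIso adj₂.unit
  /-- the adjunction morphism `Id → j^* j_!` is an isomorphism -/
  unit₃_iso : IsIso adj₃.unit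
  /-- the adjunction morphism `j^* j_* → Id` is an isomorphism -/
  counit₄_iso : IsIso adj₄.counit
  iLow_faithful : iLow.Faithful
  iLow_full : iLow.Full
  /-- `j^* i_* = 0` -/
  jStar_iLow_zero : ∀ X : A₁, IsZero (jStar.obj (iLow.obj X))
  /-- `i_*` embeds `A'` onto the full subcategory of objects annihilated by `j^*` -/
  essImage : ∀ L : A, IsZero (jStar.obj L) → ∃ X : A₁, Nonempty (iLow.obj X ≅ L)
  comp₁ : ∀ L : A, adj₃.counit.app L ≫ adj₁.unit.app L = 0
  /-- exactness of `j_! j^* → Id → i_* i^*` -/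
  exact₁ : ∀ L : A, (ShortComplex.mk (adj₃.counit.app L) (adj₁.unit.app L) (comp₁ L)).Exact
  /-- `Id → i_* i^*` is an epimorphism -/
  epi₁ : ∀ L : A, Epi (adj₁.unit.app L)
  comp₂ : ∀ L : A, adj₂.counit.app L ≫ adj₄.unit.app L = 0
  /-- exactness of `i_* i^! → Id → j_* j^*` -/
  exact₂ : ∀ L : A, (ShortComplex.mk (adj₂.counit.app L) (adj₄.unit.app L) (comp₂ L)).Exact
  /-- `i_* i^! → Id` is a monomorphism -/
  mono₂ : ∀ L : A, Mono (adj₂.counit.app L)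

variable {A₁ : Type u₁} {A : Type u₂} {A₂ : Type u₃}
  [Category.{v} A₁] [Category.{v} A] [Category.{v} A₂]
  [Abelian A₁] [Abelian A] [Abelian A₂]

namespace CategoryTheory.Limits.KernelFork

variable {C : Type*} [Category C] [HasZeroMorphisms C]

def isLimitOfIsLimitOfKernelLE {K X Y Z : C} {f : X ⟶ Y} {u : X ⟶ Z} {ι : K ⟶ X}
    {hιu : ι ≫ u = 0} (hu : IsLimit (ofι ι hιu)) (hιf : ι ≫ f = 0)
    (hfu : ∀ {W : C} (g : W ⟶ X), g ≫ f = 0 → g ≫ u = 0) :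
    IsLimit (ofι ι hιf) :=
  IsLimit.ofι ι hιf (fun g hg => hu.lift (ofι g (hfu g hg)))
    (fun g hg => hu.fac (ofι g (hfu g hg)) .zero)
    (fun g hg m hm => Fork.IsLimit.hom_ext hu <| by
      simpa [hm] using (hu.fac (ofι g (hfu g hg)) .zero).symm)

end CategoryTheory.Limits.KernelFork

namespace Recollement

variable (R : Recollement A₁ A A₂)

instance isIso_jStar_map_counit₃ (L : A) : IsIso (R.jStar.map (R.adj₃.counit.app L)) :=
  have := R.unit₃_iso
  isIso_of_hom_comp_eq_id _ (R.adj₃.right_triangle_components L)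

lemma comp_unit₄_eq_zero {W M : A} (g : W ⟶ M) (hg : R.jStar.map g = 0) :
    g ≫ R.adj₄.unit.app M = 0 := by
  have := R.jLow_additive
  rw [← R.adj₄.unit_naturality, hg, Functor.map_zero, comp_zero]

lemma jStar_map_eq_zero_of_comp_eq_zero {W M L : A} {f : M ⟶ L} [Mono (R.jStar.map f)]
    (g : W ⟶ M) (hg : g ≫ f = 0) : R.jStar.map g = 0 := by
  have := R.jStar_additive
  rw [← cancel_mono (R.jStar.map f), ← R.jStar.map_comp, hg, Functor.map_zero, zero_comp]

lemma eq_zero_of_isZero_iShriek {X : A₁} {L : A} (hL : IsZero (R.iShriek.obj L))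
    (f : R.iLow.obj X ⟶ L) : f = 0 :=
  (R.adj₂.homEquiv _ _).injective (hL.eq_of_tgt _ _)

noncomputable def isLimitCounit₂ {M L : A} (f : M ⟶ L) [Mono (R.jStar.map f)]
    (hL : IsZero (R.iShriek.obj L)) :
    IsLimit (KernelFork.ofι (R.adj₂.counit.app M)
      (R.eq_zero_of_isZero_iShriek hL (R.adj₂.counit.app M ≫ f))) :=
  have := R.mono₂ M
  KernelFork.isLimitOfIsLimitOfKernelLE (R.exact₂ M).fIsKernel _
    fun g hg => R.comp_unit₄_eq_zero g (R.jStar_map_eq_zero_of_comp_eq_zero g hg)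

end Recollement

theorem stmt1_general (R : Recollement A₁ A A₂) (L : A)
    (h2 : IsZero (R.iShriek.obj L)) :
    Nonempty (kernel (R.adj₃.counit.app L) ≅
      R.iLow.obj (R.iShriek.obj (R.jShriek.obj (R.jStar.obj L)))) :=
  ⟨IsLimit.conePointUniqueUpToIso (kernelIsKernel _) (R.isLimitCounit₂ _ h2)⟩

theorem stmt1 (R : Recollement A₁ A A₂) (L : A)
    (h1 : IsZero (R.iStar.obj L)) (h2 : IsZero (R.iShriek.obj L)) :
    Nonempty (kernel (R.adj₃.counit.app L) ≅
      R.iLow.obj (R.iShriek.obj (R.jShriek.obj (R.jStar.obj L)))) :=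
  stmt1_general R L h2
end

section
/- In a recollement of abelian categories where A has enough projectives, the left derived functor L_1 i^* vanishes on objects of the form j_! X, i.e., (L_1 i^*) ∘ j_! = 0. -/
/-!
Let `P` be a projective resolution of `j_! X` and `K = ker (P₀ → j_! X)`. Since `i^*` is right
exact, `L₁ i^* (j_! X)` vanishes as soon as `i^* K → i^* P₀` is a monomorphism. This holds for
every short exact sequence `0 → K → M → N → 0` with `N` in the image of `j_!`: the counit
`ε : j_! j^* ⟶ 𝟭` has cokernel `i_* i^*` and is an isomorphism at `N`, and `j_! j^*` is right
exact, so the snake lemma for `ε` on this sequence makes `i_* i^* K → i_* i^* M` injective.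
-/

open CategoryTheory CategoryTheory.Limits

universe v u₁ u₂ u₃

variable {A₁ : Type u₁} {A : Type u₂} {A₂ : Type u₃}
  [Category.{v} A₁] [Category.{v} A] [Category.{v} A₂]
  [Abelian A₁] [Abelian A] [Abelian A₂]

namespace CategoryTheory

variable {C D : Type*} [Category C] [Category D] [Abelian C] [Abelian D]

lemma ShortComplex.exact_iff_of_comp_mono {X₁ X₂ X₃ X₃' : C} {f : X₁ ⟶ X₂} {g : X₂ ⟶ X₃}
    {g' : X₂ ⟶ X₃'} (m : X₃ ⟶ X₃') [Mono m] (hg : g ≫ m = g') (w : f ≫ g = 0)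
    (w' : f ≫ g' = 0) : (ShortComplex.mk f g w).Exact ↔ (ShortComplex.mk f g' w').Exact :=
  exact_iff_of_epi_of_isIso_of_mono { τ₁ := 𝟙 _, τ₂ := 𝟙 _, τ₃ := m }

lemma ProjectiveResolution.isZero_leftDerived_one_obj_of_mono_map_iCycles [EnoughProjectives C]
    (F : C ⥤ D) [F.Additive] [PreservesFiniteColimits F] {Y : C} (P : ProjectiveResolution Y)
    [Mono (F.map (ShortComplex.mk _ _ P.complex_d_comp_π_f_zero).iCycles)] :
    IsZero ((F.leftDerived 1).obj Y) := by
  set S₀ := ShortComplex.mk _ _ P.complex_d_comp_π_f_zero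
  have hd : P.complex.d 2 1 ≫ S₀.toCycles = 0 := by
    rw [← cancel_mono S₀.iCycles, Category.assoc, S₀.toCycles_i, zero_comp]
    exact P.complex.d_comp_d 2 1 0
  have hT : (ShortComplex.mk _ _ hd).Exact :=
    (ShortComplex.exact_iff_of_comp_mono S₀.iCycles S₀.toCycles_i _ _).2 (P.exact_succ 0)
  have : Epi S₀.toCycles := P.exact₀.epi_toCycles
  have hFP : (((F.mapHomologicalComplex _).obj P.complex).sc' 2 1 0).Exact :=
    (ShortComplex.exact_iff_of_comp_mono (F.map S₀.iCycles)
      ((F.map_comp _ _).symm.trans (congrArg F.map S₀.toCycles_i)) _ _).1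
      (hT.map_of_epi_of_preservesCokernel F inferInstance inferInstance)
  refine IsZero.of_iso ((HomologicalComplex.exactAt_iff_isZero_homology _ _).1 ?_)
    (P.isoLeftDerivedObj F 1)
  rwa [HomologicalComplex.exactAt_iff' _ 2 1 0 (by simp) (by simp)]

end CategoryTheory

namespace Recollement

attribute [local instance] iStar_additive jShriek_additive jStar_additive iLow_faithful
  unit₃_iso epi₁

variable (R : Recollement A₁ A A₂)

instance : R.iStar.IsLeftAdjoint := R.adj₁.isLeftAdjoint

instance : R.jShriek.IsLeftAdjoint := R.adj₃.isLeftAdjoint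

instance : R.jStar.IsLeftAdjoint := R.adj₄.isLeftAdjoint

instance isIso_counit_app_jShriek_obj (X : A₂) : IsIso (R.adj₃.counit.app (R.jShriek.obj X)) := by
  rw [← R.adj₃.inv_map_unit]
  infer_instance

lemma exact_map_jStar_comp_jShriek {S : ShortComplex A} (hS : S.ShortExact) :
    (S.map (R.jStar ⋙ R.jShriek)).Exact := by
  have := hS.epi_g
  exact hS.exact.map_of_epi_of_preservesCokernel _ inferInstance inferInstance

lemma mono_iStar_map_of_shortExact {S : ShortComplex A} (hS : S.ShortExact)
    [IsIso (R.adj₃.counit.app S.X₃)] : Mono (R.iStar.map S.f) := by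
  have := hS.mono_f
  suffices Mono (R.iLow.map (R.iStar.map S.f)) from R.iLow.mono_of_mono_map this
  refine Preadditive.mono_of_cancel_zero _ fun {T} x hx => ?_
  obtain ⟨T₁, π₁, _, (y : T₁ ⟶ S.X₁), hy⟩ :=
    surjective_up_to_refinements_of_epi (R.adj₁.unit.app S.X₁) x
  have hyf : (y ≫ S.f) ≫ R.adj₁.unit.app S.X₂ = 0 := by
    rw [Category.assoc, ← R.adj₁.unit_naturality, ← Category.assoc, ← hy, Category.assoc, hx,
      comp_zero]
  obtain ⟨T₂, π₂, _, (c : T₂ ⟶ R.jShriek.obj (R.jStar.obj S.X₂)), hc⟩ :=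
    (R.exact₁ S.X₂).exact_up_to_refinements _ hyf
  replace hc : π₂ ≫ y ≫ S.f = c ≫ R.adj₃.counit.app S.X₂ := hc
  have hc0 : c ≫ (R.jStar ⋙ R.jShriek).map S.g = 0 := by
    rw [← cancel_mono (R.adj₃.counit.app S.X₃), zero_comp, Category.assoc,
      R.adj₃.counit.naturality, Functor.id_map, ← Category.assoc, ← hc, Category.assoc,
      Category.assoc, S.zero, comp_zero, comp_zero]
  obtain ⟨T₃, π₃, _, (e : T₃ ⟶ R.jShriek.obj (R.jStar.obj S.X₁)), he⟩ :=
    (R.exact_map_jStar_comp_jShriek hS).exact_up_to_refinements c hc0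
  replace he : π₃ ≫ c = e ≫ R.jShriek.map (R.jStar.map S.f) := he
  have hye : π₃ ≫ π₂ ≫ y = e ≫ R.adj₃.counit.app S.X₁ := by
    rw [← cancel_mono S.f, Category.assoc, Category.assoc, Category.assoc,
      ← R.adj₃.counit_naturality, hc, ← Category.assoc, he, Category.assoc]
  rw [← cancel_epi (π₃ ≫ π₂ ≫ π₁), comp_zero, Category.assoc, Category.assoc, hy,
    ← Category.assoc π₂, ← Category.assoc π₃, hye, Category.assoc, R.comp₁, comp_zero]

end Recollement

theorem stmt3 [EnoughProjectives A] (R : Recollement A₁ A A₂) :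
    letI := R.iStar_additive
    ∀ X : A₂, IsZero ((R.iStar.leftDerived 1).obj (R.jShriek.obj X)) := by
  intro X
  have := R.iStar_additive
  obtain ⟨P⟩ := HasProjectiveResolution.out (Z := R.jShriek.obj X)
  let S₀ := ShortComplex.mk _ _ P.complex_d_comp_π_f_zero
  have hS : (ShortComplex.mk _ _ S₀.iCycles_g).ShortExact :=
    { exact := ShortComplex.exact_of_f_is_kernel _ S₀.cyclesIsKernel }
  have : IsIso (R.adj₃.counit.app S₀.X₃) := R.isIso_counit_app_jShriek_obj X
  have : Mono (R.iStar.map S₀.iCycles) := R.mono_iStar_map_of_shortExact hS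
  exact P.isZero_leftDerived_one_obj_of_mono_map_iCycles R.iStar
end

section
/- In a recollement of abelian categories, the functor j_{!*} defined by j_{!*}X = Im(N_X : j_! X → j_* X), where N_X corresponds to the identity of X under the natural isomorphism Hom_A(j_! X, j_* X) ≅ Hom_{A''}(X, X), satisfies j^* ∘ j_{!*} ≅ Id_{A''}; in particular j_{!*} is fully faithful. -/
open CategoryTheory CategoryTheory.Limits

universe v u₁ u₂ u₃

variable {A₁ : Type u₁} {A : Type u₂} {A₂ : Type u₃}
  [Category.{v} A₁] [Category.{v} A] [Category.{v} A₂]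
  [Abelian A₁] [Abelian A] [Abelian A₂]


/-- The canonical map `N_X : j_! X ⟶ j_* X` corresponding to the identity of `X`
under `Hom_A(j_! X, j_* X) ≅ Hom_{A''}(X, j^* j_* X) ≅ Hom_{A''}(X, X)`. -/
noncomputable def Recollement.N (R : Recollement A₁ A A₂) (X : A₂) :
    R.jShriek.obj X ⟶ R.jLow.obj X :=
  haveI := R.counit₄_iso
  (R.adj₃.homEquiv X (R.jLow.obj X)).symm (inv (R.adj₄.counit.app X))

/-- The intermediate extension functor `j_{!*}`, on objects: the image of `N_X`. -/
noncomputable def Recollement.jMid (R : Recollement A₁ A A₂) (X : A₂) : A :=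
  Limits.image (R.N X)

/-
`j^*` is a right adjoint, so it preserves the mono `image.ι N_X`; and `j^* N_X` is an
isomorphism, being `(j^* j_* X ≅ X)⁻¹` up to the unit `X ≅ j^* j_! X`. Hence
`j^*(image.ι N_X)` is both mono and epi, so `j^* j_{!*} X ≅ j^* j_* X ≅ X`.
-/

theorem CategoryTheory.Functor.isIso_map_image_ι {C D : Type*} [Category C] [Category D]
    [Balanced D] (F : C ⥤ D) [F.PreservesMonomorphisms] {X Y : C} (f : X ⟶ Y) [HasImage f]
    [IsIso (F.map f)] : IsIso (F.map (image.ι f)) := by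
  have : Epi (F.map (factorThruImage f) ≫ F.map (image.ι f)) := by
    rw [← F.map_comp, image.fac]
    infer_instance
  have : Epi (F.map (image.ι f)) := epi_of_epi (F.map (factorThruImage f)) _
  exact isIso_of_mono_of_epi _

namespace Recollement

variable (R : Recollement A₁ A A₂)

instance isIso_unit₃_app (X : A₂) : IsIso (R.adj₃.unit.app X) :=
  haveI := R.unit₃_iso
  inferInstance

instance isIso_counit₄_app (X : A₂) : IsIso (R.adj₄.counit.app X) :=
  haveI := R.counit₄_iso
  inferInstance

instance jStar_preservesMonomorphisms : R.jStar.PreservesMonomorphisms :=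
  Functor.preservesMonomorphisms_of_adjunction R.adj₃

theorem unit₃_app_comp_jStar_map_N (X : A₂) :
    R.adj₃.unit.app X ≫ R.jStar.map (R.N X) = inv (R.adj₄.counit.app X) := by
  have h := (R.adj₃.homEquiv _ _).apply_symm_apply (inv (R.adj₄.counit.app X))
  rwa [Adjunction.homEquiv_unit] at h

theorem jStar_map_N (X : A₂) :
    R.jStar.map (R.N X) = inv (R.adj₃.unit.app X) ≫ inv (R.adj₄.counit.app X) := by
  rw [← unit₃_app_comp_jStar_map_N, IsIso.inv_hom_id_assoc]

instance isIso_jStar_map_N (X : A₂) : IsIso (R.jStar.map (R.N X)) := by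
  rw [jStar_map_N]
  infer_instance

instance isIso_jStar_map_image_ι_N (X : A₂) : IsIso (R.jStar.map (image.ι (R.N X))) :=
  R.jStar.isIso_map_image_ι (R.N X)

end Recollement

theorem stmt5 (R : Recollement A₁ A A₂) :
    ∀ X : A₂, Nonempty (R.jStar.obj (R.jMid X) ≅ X) := by
  intro X
  exact ⟨(asIso (R.jStar.map (image.ι (R.N X))) : R.jStar.obj (image (R.N X)) ≅ _) ≪≫
    asIso (R.adj₄.counit.app X)⟩
end

section
/- Let Π_λ be the quotient of the path algebra of the double of the quiver Q_∞ (two vertices ∞, 0; arrows v : 0 → ∞ and X : 0 → 0, with reverse arrows w = v* and Y = X*) by the relations [X,Y] − wv = λ_0 e_0 and vw = λ_∞ e_∞, with λ_0 = 1, λ_∞ = −n. Then the quotient of Π_λ by the two-sided ideal generated by the idempotent e_∞ is isomorphic as a C-algebra to the first Weyl algebra A_1 = C⟨x,y⟩/⟨xy − yx − 1⟩. -/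
open scoped ComplexOrder

/-- Generators of the deformed preprojective algebra `Π_λ(Q_∞)` of the quiver with two
vertices `{∞, 0}`, arrows `v : 0 → ∞`, `X : 0 → 0` and their reverses `w = v*`, `Y = X*`. -/
inductive PiGen : Type
  | X | Y | v | w | e0 | einf
  deriving DecidableEq

/-- Generators as elements of the free algebra. -/
noncomputable def pg (a : PiGen) : FreeAlgebra ℂ PiGen := FreeAlgebra.ι ℂ a

/-- The defining relations of `Π_λ`, `λ = (λ_∞, λ_0)`: the path algebra relations for the
double quiver (orthogonal idempotents `e_0, e_∞` summing to `1`, `X = e_0 X e_0`,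
`Y = e_0 Y e_0`, `v = e_∞ v e_0`, `w = e_0 w e_∞`) together with
`[X,Y] - wv = λ_0 e_0` and `vw = λ_∞ e_∞`. -/
inductive PiRel (lam0 laminf : ℂ) : FreeAlgebra ℂ PiGen → FreeAlgebra ℂ PiGen → Prop
  | idem_e0 : PiRel lam0 laminf (pg .e0 * pg .e0) (pg .e0)
  | idem_einf : PiRel lam0 laminf (pg .einf * pg .einf) (pg .einf)
  | orth₁ : PiRel lam0 laminf (pg .e0 * pg .einf) 0
  | orth₂ : PiRel lam0 laminf (pg .einf * pg .e0) 0
  | sum_one : PiRel lam0 laminf (pg .e0 + pg .einf) 1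
  | X_path : PiRel lam0 laminf (pg .e0 * pg .X * pg .e0) (pg .X)
  | Y_path : PiRel lam0 laminf (pg .e0 * pg .Y * pg .e0) (pg .Y)
  | v_path : PiRel lam0 laminf (pg .einf * pg .v * pg .e0) (pg .v)
  | w_path : PiRel lam0 laminf (pg .e0 * pg .w * pg .einf) (pg .w)
  | main : PiRel lam0 laminf (pg .X * pg .Y - pg .Y * pg .X - pg .w * pg .v) (lam0 • pg .e0)
  | vw : PiRel lam0 laminf (pg .v * pg .w) (laminf • pg .einf)

/-- The deformed preprojective algebra `Π_λ(Q_∞)` with weight `λ = (λ_∞, λ_0)`. -/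
noncomputable abbrev PiAlg (lam0 laminf : ℂ) := RingQuot (PiRel lam0 laminf)

noncomputable def PX (lam0 laminf : ℂ) : PiAlg lam0 laminf :=
  RingQuot.mkAlgHom ℂ (PiRel lam0 laminf) (pg .X)
noncomputable def PY (lam0 laminf : ℂ) : PiAlg lam0 laminf :=
  RingQuot.mkAlgHom ℂ (PiRel lam0 laminf) (pg .Y)
noncomputable def Pv (lam0 laminf : ℂ) : PiAlg lam0 laminf :=
  RingQuot.mkAlgHom ℂ (PiRel lam0 laminf) (pg .v)
noncomputable def Pw (lam0 laminf : ℂ) : PiAlg lam0 laminf :=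
  RingQuot.mkAlgHom ℂ (PiRel lam0 laminf) (pg .w)
noncomputable def Pe0 (lam0 laminf : ℂ) : PiAlg lam0 laminf :=
  RingQuot.mkAlgHom ℂ (PiRel lam0 laminf) (pg .e0)
noncomputable def Peinf (lam0 laminf : ℂ) : PiAlg lam0 laminf :=
  RingQuot.mkAlgHom ℂ (PiRel lam0 laminf) (pg .einf)

/-- Generators `x, y` of the Weyl algebra / free algebra `ℂ⟨x,y⟩`. -/
inductive WGen : Type
  | x | y
  deriving DecidableEq

/-- The Weyl relation `xy - yx = 1`. -/
inductive WRel : FreeAlgebra ℂ WGen → FreeAlgebra ℂ WGen → Prop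
  | mk : WRel (FreeAlgebra.ι ℂ WGen.x * FreeAlgebra.ι ℂ WGen.y -
      FreeAlgebra.ι ℂ WGen.y * FreeAlgebra.ι ℂ WGen.x) 1

/-- The first Weyl algebra `A_1 = ℂ⟨x,y⟩/⟨xy - yx - 1⟩`. -/
noncomputable abbrev WeylAlg := RingQuot WRel

/-- The relation killing `e_∞`, so that `RingQuot` of it is the quotient of `Π_λ`
by the two-sided ideal generated by `e_∞`. -/
inductive KillEinf (n : ℂ) : PiAlg 1 (-n) → PiAlg 1 (-n) → Prop
  | mk : KillEinf n (Peinf 1 (-n)) 0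

/-- The quotient `Π_λ/⟨e_∞⟩`. -/
noncomputable abbrev PiModEinf (n : ℂ) := RingQuot (KillEinf n)

/-!
Killing `e_∞` forces `e_0 = 1 - e_∞ = 1`, and `v = e_∞ v e_0`, `w = e_0 w e_∞` vanish, so
the relation `[X,Y] - wv = e_0` becomes the Weyl relation `[X,Y] = 1`. Conversely `X ↦ x`,
`Y ↦ y`, `e_0 ↦ 1`, `v, w, e_∞ ↦ 0` respects all relations of `Π_λ` when `λ_0 = 1`, and
the two maps are mutually inverse on generators.
-/

namespace WeylAlg

noncomputable def x : WeylAlg := RingQuot.mkAlgHom ℂ WRel (FreeAlgebra.ι ℂ WGen.x)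

noncomputable def y : WeylAlg := RingQuot.mkAlgHom ℂ WRel (FreeAlgebra.ι ℂ WGen.y)

theorem x_mul_y_sub_y_mul_x : x * y - y * x = 1 := by
  simpa [x, y] using RingQuot.mkAlgHom_rel ℂ WRel.mk

variable {A : Type*} [Ring A] [Algebra ℂ A]

noncomputable def lift (a b : A) (h : a * b - b * a = 1) : WeylAlg →ₐ[ℂ] A :=
  RingQuot.liftAlgHom ℂ ⟨FreeAlgebra.lift ℂ fun | .x => a | .y => b, by
    rintro _ _ ⟨⟩
    simpa using h⟩

@[simp]
theorem lift_x (a b : A) (h : a * b - b * a = 1) : lift a b h x = a := by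
  simp [lift, x, RingQuot.liftAlgHom_mkAlgHom_apply]

@[simp]
theorem lift_y (a b : A) (h : a * b - b * a = 1) : lift a b h y = b := by
  simp [lift, y, RingQuot.liftAlgHom_mkAlgHom_apply]

theorem algHom_ext {f g : WeylAlg →ₐ[ℂ] A} (hx : f x = g x) (hy : f y = g y) : f = g :=
  RingQuot.ringQuot_ext' ℂ f g <| FreeAlgebra.hom_ext <| funext fun | .x => hx | .y => hy

end WeylAlg

namespace PiAlg

variable {lam0 laminf : ℂ}

theorem Pe0_add_Peinf : Pe0 lam0 laminf + Peinf lam0 laminf = 1 := by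
  simpa [Pe0, Peinf] using
    RingQuot.mkAlgHom_rel ℂ (PiRel.sum_one (lam0 := lam0) (laminf := laminf))

theorem Peinf_mul_Pv_mul_Pe0 :
    Peinf lam0 laminf * Pv lam0 laminf * Pe0 lam0 laminf = Pv lam0 laminf := by
  simpa [Pe0, Peinf, Pv] using
    RingQuot.mkAlgHom_rel ℂ (PiRel.v_path (lam0 := lam0) (laminf := laminf))

theorem Pe0_mul_Pw_mul_Peinf :
    Pe0 lam0 laminf * Pw lam0 laminf * Peinf lam0 laminf = Pw lam0 laminf := by
  simpa [Pe0, Peinf, Pw] using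
    RingQuot.mkAlgHom_rel ℂ (PiRel.w_path (lam0 := lam0) (laminf := laminf))

theorem PX_mul_PY_sub_PY_mul_PX_sub_Pw_mul_Pv :
    PX lam0 laminf * PY lam0 laminf - PY lam0 laminf * PX lam0 laminf -
      Pw lam0 laminf * Pv lam0 laminf = lam0 • Pe0 lam0 laminf := by
  simpa [PX, PY, Pw, Pv, Pe0] using
    RingQuot.mkAlgHom_rel ℂ (PiRel.main (lam0 := lam0) (laminf := laminf))

section MapsKillingEinf

variable {A : Type*} [Semiring A] [Algebra ℂ A] {φ : PiAlg lam0 laminf →ₐ[ℂ] A}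

theorem map_Pe0_of_map_Peinf (hφ : φ (Peinf lam0 laminf) = 0) : φ (Pe0 lam0 laminf) = 1 := by
  simpa [hφ] using congrArg φ Pe0_add_Peinf

theorem map_Pv_of_map_Peinf (hφ : φ (Peinf lam0 laminf) = 0) : φ (Pv lam0 laminf) = 0 := by
  simpa [hφ] using (congrArg φ Peinf_mul_Pv_mul_Pe0).symm

theorem map_Pw_of_map_Peinf (hφ : φ (Peinf lam0 laminf) = 0) : φ (Pw lam0 laminf) = 0 := by
  simpa [hφ] using (congrArg φ Pe0_mul_Pw_mul_Peinf).symm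

theorem map_commutator_of_map_Peinf {A : Type*} [Ring A] [Algebra ℂ A]
    {φ : PiAlg lam0 laminf →ₐ[ℂ] A} (hφ : φ (Peinf lam0 laminf) = 0) :
    φ (PX lam0 laminf) * φ (PY lam0 laminf) - φ (PY lam0 laminf) * φ (PX lam0 laminf) =
      algebraMap ℂ A lam0 := by
  simpa [map_Pe0_of_map_Peinf hφ, map_Pv_of_map_Peinf hφ, Algebra.smul_def]
    using congrArg φ PX_mul_PY_sub_PY_mul_PX_sub_Pw_mul_Pv

end MapsKillingEinf

noncomputable def genToWeyl : PiGen → WeylAlg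
  | .X => WeylAlg.x | .Y => WeylAlg.y | .e0 => 1 | .v => 0 | .w => 0 | .einf => 0

noncomputable def toWeyl (laminf : ℂ) : PiAlg 1 laminf →ₐ[ℂ] WeylAlg :=
  RingQuot.liftAlgHom ℂ ⟨FreeAlgebra.lift ℂ genToWeyl, by
    intro _ _ h
    induction h <;> simp [pg, genToWeyl, WeylAlg.x_mul_y_sub_y_mul_x]⟩

theorem toWeyl_mkAlgHom_pg (laminf : ℂ) (a : PiGen) :
    toWeyl laminf (RingQuot.mkAlgHom ℂ _ (pg a)) = genToWeyl a := by
  simp [toWeyl, pg, RingQuot.liftAlgHom_mkAlgHom_apply]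

end PiAlg

namespace PiModEinf

open PiAlg

variable {n : ℂ}

noncomputable def mk (n : ℂ) : PiAlg 1 (-n) →ₐ[ℂ] PiModEinf n :=
  RingQuot.mkAlgHom ℂ (KillEinf n)

theorem mk_Peinf : mk n (Peinf 1 (-n)) = 0 :=
  (RingQuot.mkAlgHom_rel ℂ KillEinf.mk).trans (map_zero _)

theorem algHom_ext {A : Type*} [Semiring A] [Algebra ℂ A] {f g : PiModEinf n →ₐ[ℂ] A}
    (h : ∀ a, f (mk n (RingQuot.mkAlgHom ℂ _ (pg a))) =
      g (mk n (RingQuot.mkAlgHom ℂ _ (pg a)))) :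
    f = g :=
  RingQuot.ringQuot_ext' ℂ f g <| RingQuot.ringQuot_ext' ℂ _ _ <|
    FreeAlgebra.hom_ext <| funext h

noncomputable def toWeyl (n : ℂ) : PiModEinf n →ₐ[ℂ] WeylAlg :=
  RingQuot.liftAlgHom ℂ ⟨PiAlg.toWeyl (-n), by
    rintro _ _ ⟨⟩
    simpa [Peinf, genToWeyl] using toWeyl_mkAlgHom_pg (-n) .einf⟩

noncomputable def ofWeyl (n : ℂ) : WeylAlg →ₐ[ℂ] PiModEinf n :=
  WeylAlg.lift (mk n (PX 1 (-n))) (mk n (PY 1 (-n))) <| by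
    simpa using map_commutator_of_map_Peinf (A := PiModEinf n) mk_Peinf

theorem toWeyl_mk_mkAlgHom_pg (a : PiGen) :
    toWeyl n (mk n (RingQuot.mkAlgHom ℂ _ (pg a))) = genToWeyl a := by
  rw [toWeyl, mk, RingQuot.liftAlgHom_mkAlgHom_apply, toWeyl_mkAlgHom_pg]

theorem toWeyl_comp_ofWeyl : (toWeyl n).comp (ofWeyl n) = AlgHom.id ℂ WeylAlg := by
  apply WeylAlg.algHom_ext <;> simp [ofWeyl, PX, PY, toWeyl_mk_mkAlgHom_pg, genToWeyl]

theorem ofWeyl_comp_toWeyl : (ofWeyl n).comp (toWeyl n) = AlgHom.id ℂ (PiModEinf n) := by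
  have hP := mk_Peinf (n := n)
  refine algHom_ext fun a => ?_
  rw [AlgHom.comp_apply, toWeyl_mk_mkAlgHom_pg, AlgHom.id_apply]
  cases a <;> simp only [genToWeyl, map_zero, map_one]
  exacts [WeylAlg.lift_x .., WeylAlg.lift_y .., (map_Pv_of_map_Peinf hP).symm,
    (map_Pw_of_map_Peinf hP).symm, (map_Pe0_of_map_Peinf hP).symm, hP.symm]

end PiModEinf

/-- For `λ = (λ_∞, λ_0) = (-n, 1)`, the quotient of `Π_λ(Q_∞)` by the two-sided ideal
generated by the idempotent `e_∞` is isomorphic as a `ℂ`-algebra to the first Weyl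
algebra `A_1`. -/
theorem stmt8 (n : ℂ) : Nonempty (PiModEinf n ≃ₐ[ℂ] WeylAlg) :=
  ⟨AlgEquiv.ofAlgHom (PiModEinf.toWeyl n) (PiModEinf.ofWeyl n) PiModEinf.toWeyl_comp_ofWeyl
    PiModEinf.ofWeyl_comp_toWeyl⟩
end

section
/- Let Π = Π_λ(Q_∞) with λ = (−n, 1) and n ≠ 0 (relations [X,Y] − wv = e_0, vw = −n e_∞). Then Π e_0 Π = Π; consequently the functor M ↦ M e_0 is an equivalence of categories from Mod(Π) to Mod(e_0 Π e_0). -/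
open scoped ComplexOrder

variable (n : ℂ)

local notation "E" => Pe0 1 (-n)

lemma E_idem : (E) * (E) = (E) := by
  simpa [Pe0] using RingQuot.mkAlgHom_rel ℂ (PiRel.idem_e0 (lam0 := 1) (laminf := -n))

/-- The corner (non-unital) subring `e_0 Π e_0`. -/
noncomputable def cornerSubring : NonUnitalSubring (PiAlg 1 (-n)) where
  carrier := {x | E * x * E = x}
  zero_mem' := by simp
  add_mem' := by
    intro a b ha hb
    simp only [Set.mem_setOf_eq] at *
    rw [mul_add, add_mul, ha, hb]
  neg_mem' := by
    intro a ha
    simp only [Set.mem_setOf_eq] at *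
    have h : E * -a * E = -(E * a * E) := by
      noncomm_ring
      rw [smul_mul_assoc, mul_smul_comm]
    rw [h, ha]
  mul_mem' := by
    intro a b ha hb
    simp only [Set.mem_setOf_eq] at *
    have ha' : E * a = a := by
      conv_lhs => rw [← ha]
      rw [← mul_assoc, ← mul_assoc, E_idem, ha]
    have hb' : b * E = b := by
      conv_lhs => rw [← hb]
      rw [mul_assoc, E_idem, hb]
    calc E * (a * b) * E = (E * a) * (b * E) := by noncomm_ring
    _ = a * b := by rw [ha', hb']

/-- The corner ring `e_0 Π e_0`, a unital ring with unit `e_0`. -/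
noncomputable def Corner := cornerSubring n

noncomputable instance : NonUnitalRing (Corner n) :=
  inferInstanceAs (NonUnitalRing (cornerSubring n))

noncomputable instance : Ring (Corner n) where
  __ := (inferInstanceAs (NonUnitalRing (cornerSubring n)) : NonUnitalRing (cornerSubring n))
  one := ⟨E, by
    show E * E * E = E
    rw [E_idem, E_idem]⟩
  one_mul := by
    rintro ⟨a, ha⟩
    ext
    show E * a = a
    conv_lhs => rw [← ha]
    rw [← mul_assoc, ← mul_assoc, E_idem, ha]
  mul_one := by
    rintro ⟨a, ha⟩
    ext
    show a * E = a
    conv_lhs => rw [← ha]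
    rw [mul_assoc, E_idem, ha]

/-!
`Π e₀ Π = Π` because `1 = e₀ + e_∞` and `e_∞ = λ_∞⁻¹ v e₀ w`.

For any idempotent `e` of a ring `R` with `R e R = R`, `M ↦ e M` is an equivalence
`Mod R ≌ Mod (e R e)` with inverse `N ↦ Hom_{eRe}(e R, N)`. The counit
`e · Hom_{eRe}(e R, N) → N`, `φ ↦ φ e`, is bijective for every idempotent. The kernel and the
cokernel of the unit `M → Hom_{eRe}(e R, e M)`, `m ↦ (x ↦ x m)`, are killed by `e`, hence by
the two-sided ideal `R e R = R`, so they vanish.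
-/

universe u

open CategoryTheory

theorem Module.subsingleton_of_smul_eq_zero_of_span_eq_top {R M : Type*} [Ring R]
    [AddCommGroup M] [Module R M] {e : R} (hfull : TwoSidedIdeal.span {e} = ⊤)
    (h : ∀ m : M, e • m = 0) : Subsingleton M := by
  have hle : TwoSidedIdeal.span {e} ≤ (Module.annihilator R M).toTwoSided :=
    TwoSidedIdeal.span_le.mpr <| Set.singleton_subset_iff.mpr <|
      Ideal.mem_toTwoSided.mpr (Module.mem_annihilator.mpr h)
  have hone : (1 : R) ∈ Module.annihilator R M :=
    Ideal.mem_toTwoSided.mp (hfull ▸ hle <| TwoSidedIdeal.mem_top _)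
  exact Module.annihilator_eq_top_iff.mp ((Ideal.eq_top_iff_one _).mpr hone)

namespace IsIdempotentElem

variable {R : Type u} [Ring R] {e : R} (he : IsIdempotentElem e)

lemma mul_corner (c : he.Corner) : e * c.1 = c.1 :=
  ((Subsemigroup.mem_corner_iff he).mp c.2).1

lemma corner_mul (c : he.Corner) : c.1 * e = c.1 :=
  ((Subsemigroup.mem_corner_iff he).mp c.2).2

def cornerModule (_ : IsIdempotentElem e) (M : Type*) [AddCommGroup M] [Module R M] :
    AddSubgroup M where
  carrier := {m | e • m = m}
  zero_mem' := smul_zero e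
  add_mem' {m m'} hm hm' := by simp_all [smul_add]
  neg_mem' {m} hm := by simp_all [smul_neg]

variable {M : Type*} [AddCommGroup M] [Module R M]

lemma mem_cornerModule {m : M} : m ∈ he.cornerModule M ↔ e • m = m := Iff.rfl

lemma smul_mem_cornerModule {x : R} (hx : e * x = x) (m : M) : x • m ∈ he.cornerModule M := by
  rw [mem_cornerModule, smul_smul, hx]

instance : SMul he.Corner (he.cornerModule M) :=
  ⟨fun c m => ⟨c.1 • m.1, he.smul_mem_cornerModule (he.mul_corner c) m.1⟩⟩

@[simp] lemma coe_corner_smul (c : he.Corner) (m : he.cornerModule M) :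
    ((c • m : he.cornerModule M) : M) = c.1 • (m : M) := rfl

instance : Module he.Corner (he.cornerModule M) where
  one_smul m := Subtype.ext m.2
  mul_smul c d m := Subtype.ext (mul_smul c.1 d.1 m.1)
  smul_zero c := Subtype.ext (smul_zero c.1)
  smul_add c m m' := Subtype.ext (smul_add c.1 m.1 m'.1)
  add_smul c d m := Subtype.ext (add_smul c.1 d.1 m.1)
  zero_smul m := Subtype.ext (zero_smul R m.1)

lemma mul_mem_cornerModule (x : he.cornerModule R) (r : R) : x.1 * r ∈ he.cornerModule R :=
  he.smul_mem_cornerModule x.2 r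

variable {N : Type*} [AddCommGroup N] [Module he.Corner N]

instance : SMul R (he.cornerModule R →ₗ[he.Corner] N) :=
  ⟨fun r φ =>
    { toFun := fun x => φ ⟨x.1 * r, he.mul_mem_cornerModule x r⟩
      map_add' := fun x y => by rw [← map_add]; exact congrArg φ (Subtype.ext (add_mul _ _ _))
      map_smul' := fun c x => by
        rw [RingHom.id_apply, ← map_smul]; exact congrArg φ (Subtype.ext (mul_assoc _ _ _)) }⟩

@[simp] lemma smul_hom_apply (r : R) (φ : he.cornerModule R →ₗ[he.Corner] N)
    (x : he.cornerModule R) :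
    (r • φ) x = φ ⟨x.1 * r, he.mul_mem_cornerModule x r⟩ := rfl

instance : Module R (he.cornerModule R →ₗ[he.Corner] N) where
  one_smul φ := LinearMap.ext fun x => congrArg φ (Subtype.ext (mul_one _))
  mul_smul r s φ := LinearMap.ext fun x => congrArg φ (Subtype.ext (mul_assoc _ _ _).symm)
  smul_zero r := rfl
  smul_add r φ ψ := rfl
  add_smul r s φ := LinearMap.ext fun x => by
    simp only [smul_hom_apply, LinearMap.add_apply, ← map_add]
    exact congrArg φ (Subtype.ext (mul_add _ _ _))
  zero_smul φ := LinearMap.ext fun x => by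
    simp only [smul_hom_apply, LinearMap.zero_apply]
    exact (congrArg φ (Subtype.ext (mul_zero _))).trans (map_zero φ)

def generator : he.cornerModule R := ⟨e, he.eq⟩

def toCorner : he.cornerModule R →ₗ[he.Corner] he.Corner where
  toFun x := ⟨x.1 * e, (Subsemigroup.mem_corner_iff he).mpr
    ⟨by rw [← mul_assoc]; exact congrArg (· * e) x.2, by rw [mul_assoc, he.eq]⟩⟩
  map_add' x y := Subtype.ext (add_mul x.1 y.1 e)
  map_smul' c x := Subtype.ext (mul_assoc c.1 x.1 e)

lemma toCorner_generator : he.toCorner he.generator = 1 := Subtype.ext he.eq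

lemma idem_smul_apply (φ : he.cornerModule R →ₗ[he.Corner] N) (x : he.cornerModule R) :
    (e • φ) x = he.toCorner x • φ he.generator := by
  rw [← map_smul]
  exact congrArg φ (Subtype.ext (show x.1 * e = x.1 * e * e by rw [mul_assoc, he.eq]))

variable (M) in
def cornerUnit : M →ₗ[R] (he.cornerModule R →ₗ[he.Corner] he.cornerModule M) where
  toFun m :=
    { toFun x := ⟨x.1 • m, he.smul_mem_cornerModule x.2 m⟩
      map_add' x y := Subtype.ext (add_smul x.1 y.1 m)
      map_smul' c x := Subtype.ext (mul_smul c.1 x.1 m) }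
  map_add' m m' := LinearMap.ext fun x => Subtype.ext (smul_add x.1 m m')
  map_smul' r m := LinearMap.ext fun x => Subtype.ext (smul_smul x.1 r m)

lemma cornerUnit_apply_generator (φ : he.cornerModule R →ₗ[he.Corner] he.cornerModule M) :
    he.cornerUnit M (φ he.generator) = e • φ := by
  refine LinearMap.ext fun x => Subtype.ext ?_
  change x.1 • (φ he.generator).1 = ((e • φ) x).1
  rw [he.idem_smul_apply, coe_corner_smul]
  change x.1 • (φ he.generator).1 = (x.1 * e) • (φ he.generator).1
  rw [mul_smul, (φ he.generator).2]

theorem cornerUnit_bijective (hfull : TwoSidedIdeal.span {e} = ⊤) :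
    Function.Bijective (he.cornerUnit M) := by
  constructor
  · rw [← LinearMap.ker_eq_bot, ← Submodule.subsingleton_iff_eq_bot]
    refine Module.subsingleton_of_smul_eq_zero_of_span_eq_top hfull fun m => Subtype.ext ?_
    have h := LinearMap.congr_fun (LinearMap.mem_ker.mp m.2) he.generator
    exact (congrArg Subtype.val h :)
  · rw [← LinearMap.range_eq_top, ← Submodule.Quotient.subsingleton_iff]
    refine Module.subsingleton_of_smul_eq_zero_of_span_eq_top hfull fun q => ?_
    induction q using Submodule.Quotient.induction_on with
    | H φ =>
      rw [← Submodule.Quotient.mk_smul, Submodule.Quotient.mk_eq_zero]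
      exact ⟨_, he.cornerUnit_apply_generator φ⟩

variable (N) in
def cornerCounit : he.cornerModule (he.cornerModule R →ₗ[he.Corner] N) →ₗ[he.Corner] N where
  toFun ψ := ψ.1 he.generator
  map_add' ψ ψ' := rfl
  map_smul' c ψ := by
    rw [RingHom.id_apply, ← map_smul]
    exact congrArg ψ.1 (Subtype.ext ((he.mul_corner c).trans (he.corner_mul c).symm))

theorem cornerCounit_bijective : Function.Bijective (he.cornerCounit N) := by
  have hψ (ψ : he.cornerModule (he.cornerModule R →ₗ[he.Corner] N)) (x : he.cornerModule R) :
      ψ.1 x = he.toCorner x • he.cornerCounit N ψ :=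
    (congrArg (· x) ψ.2).symm.trans (he.idem_smul_apply ψ.1 x)
  constructor
  · intro ψ ψ' h
    exact Subtype.ext (LinearMap.ext fun x => by rw [hψ, hψ ψ', h])
  · intro y
    let φ := LinearMap.toSpanSingleton he.Corner N y ∘ₗ he.toCorner
    refine ⟨⟨φ, LinearMap.ext fun x => ?_⟩, ?_⟩
    · rw [he.idem_smul_apply]
      simp [φ, toCorner_generator]
    · simp [φ, cornerCounit, toCorner_generator]

def cornerModuleMap {M' : Type*} [AddCommGroup M'] [Module R M'] (f : M →ₗ[R] M') :
    he.cornerModule M →ₗ[he.Corner] he.cornerModule M' where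
  toFun m := ⟨f m.1, by rw [mem_cornerModule, ← map_smul, m.2]⟩
  map_add' m m' := Subtype.ext (map_add f m.1 m'.1)
  map_smul' c m := Subtype.ext (map_smul f c.1 m.1)

def cornerFunctor : ModuleCat.{u} R ⥤ ModuleCat.{u} he.Corner where
  obj M := .of he.Corner (he.cornerModule M)
  map f := ModuleCat.ofHom (he.cornerModuleMap f.hom)

def cornerHomFunctor : ModuleCat.{u} he.Corner ⥤ ModuleCat.{u} R where
  obj N := .of R (he.cornerModule R →ₗ[he.Corner] N)
  map g := ModuleCat.ofHom
    { toFun := g.hom.comp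
      map_add' φ ψ := LinearMap.comp_add φ ψ g.hom
      map_smul' r φ := rfl }

noncomputable def cornerEquivalence (hfull : TwoSidedIdeal.span {e} = ⊤) :
    ModuleCat.{u} R ≌ ModuleCat.{u} he.Corner :=
  .mk he.cornerFunctor he.cornerHomFunctor
    (NatIso.ofComponents
      (fun M => (LinearEquiv.ofBijective _ (he.cornerUnit_bijective (M := M) hfull)).toModuleIso)
      (fun f => ModuleCat.hom_ext (LinearMap.ext fun m => LinearMap.ext fun x => Subtype.ext
        (map_smul f.hom x.1 m).symm)))
    (NatIso.ofComponents
      (fun N => (LinearEquiv.ofBijective _ (he.cornerCounit_bijective (N := N))).toModuleIso)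
      (fun _ => rfl))

end IsIdempotentElem

section Relations

variable {lam0 laminf : ℂ}

lemma Pe0_add_Peinf : Pe0 lam0 laminf + Peinf lam0 laminf = 1 := by
  simpa [Pe0, Peinf] using
    RingQuot.mkAlgHom_rel ℂ (PiRel.sum_one (lam0 := lam0) (laminf := laminf))

lemma isIdempotentElem_Pe0 : IsIdempotentElem (Pe0 lam0 laminf) := by
  unfold IsIdempotentElem
  simpa [Pe0] using RingQuot.mkAlgHom_rel ℂ (PiRel.idem_e0 (lam0 := lam0) (laminf := laminf))

lemma Pv_mul_Pe0 : Pv lam0 laminf * Pe0 lam0 laminf = Pv lam0 laminf := by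
  have h : Peinf lam0 laminf * Pv lam0 laminf * Pe0 lam0 laminf = Pv lam0 laminf := by
    simpa [Peinf, Pv, Pe0] using
      RingQuot.mkAlgHom_rel ℂ (PiRel.v_path (lam0 := lam0) (laminf := laminf))
  rw [← h, mul_assoc, isIdempotentElem_Pe0.eq]

lemma Pv_mul_Pw : Pv lam0 laminf * Pw lam0 laminf = laminf • Peinf lam0 laminf := by
  simpa [Pv, Pw, Peinf] using
    RingQuot.mkAlgHom_rel ℂ (PiRel.vw (lam0 := lam0) (laminf := laminf))

lemma one_eq_Pe0_add (h : laminf ≠ 0) :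
    1 = Pe0 lam0 laminf + (laminf⁻¹ • Pv lam0 laminf) * Pe0 lam0 laminf * Pw lam0 laminf := by
  rw [smul_mul_assoc, smul_mul_assoc, Pv_mul_Pe0, Pv_mul_Pw, smul_smul, inv_mul_cancel₀ h,
    one_smul, Pe0_add_Peinf]

theorem span_Pe0_eq_top (h : laminf ≠ 0) : TwoSidedIdeal.span {Pe0 lam0 laminf} = ⊤ := by
  have he : Pe0 lam0 laminf ∈ TwoSidedIdeal.span {Pe0 lam0 laminf} :=
    TwoSidedIdeal.subset_span rfl
  rw [← TwoSidedIdeal.one_mem_iff, one_eq_Pe0_add h]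
  exact add_mem he (TwoSidedIdeal.mul_mem_right _ _ _ (TwoSidedIdeal.mul_mem_left _ _ _ he))

end Relations

def cornerRingEquiv : Corner n ≃+* (isIdempotentElem_Pe0 (lam0 := 1) (laminf := -n)).Corner where
  toFun x := ⟨x.1, x.1, x.2⟩
  invFun x := ⟨x.1, by
    obtain ⟨hl, hr⟩ := (Subsemigroup.mem_corner_iff isIdempotentElem_Pe0).mp x.2
    change E * x.1 * E = x.1
    rw [hl, hr]⟩
  map_mul' _ _ := rfl
  map_add' _ _ := rfl

/-- `Π e_0 Π = Π`; consequently `Mod(Π) ≃ Mod(e_0 Π e_0)`. -/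
theorem stmt9 (hn : n ≠ 0) :
    TwoSidedIdeal.span {E} = (⊤ : TwoSidedIdeal (PiAlg 1 (-n))) ∧
    Nonempty (ModuleCat.{0} (PiAlg 1 (-n)) ≌ ModuleCat.{0} (Corner n)) := by
  have hfull := span_Pe0_eq_top (lam0 := 1) (neg_ne_zero.mpr hn)
  exact ⟨hfull, ⟨(isIdempotentElem_Pe0.cornerEquivalence hfull).trans
    (ModuleCat.restrictScalarsEquivalenceOfRingEquiv (cornerRingEquiv n))⟩⟩
end

section
/- Let Γ be a cyclic group of order m with primitive character χ, and let S_τ(Γ) be the algebra generated by x, y and the group algebra CΓ with relations g·x = χ(g) x·g, g·y = χ^{−1}(g) y·g, xy − yx = τ, where τ ∈ CΓ. Let Π_τ(Q) be the deformed preprojective algebra of the cyclic quiver with m vertices e_0,...,e_{m−1} and arrows X_k : k+1 → k (indices mod m) with reverses Y_k, with relations X_k Y_k − Y_{k−1} X_{k−1} = τ_k e_k (indices mod m). Then the assignment sending the idempotent ε_i = (1/m) Σ_{g∈Γ} χ^i(g) g to e_i, x to Σ_i X_i, and y to Σ_i Y_i extends to an algebra isomorphism S_τ(Γ) → Π_τ(Q).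 -/
/-- Generators of the deformed preprojective algebra of the cyclic quiver of type
`Ã_m`: arrows `X_k : k+1 → k`, reverse arrows `Y_k : k → k+1`, and vertex
idempotents `e_k`, `k ∈ ℤ/mℤ`. -/
inductive CGen (m : ℕ) : Type
  | X (k : ZMod m) | Y (k : ZMod m) | e (k : ZMod m)

/-- Generators as elements of the free algebra. -/
noncomputable def cgen {m : ℕ} (a : CGen m) : FreeAlgebra ℂ (CGen m) := FreeAlgebra.ι ℂ a

/-- Defining relations of the deformed preprojective algebra `Π_τ(Q)` of the cyclic
quiver: orthogonal idempotents summing to `1`, path relations `e_k X_k e_{k+1} = X_k`,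
`e_{k+1} Y_k e_k = Y_k`, and `X_k Y_k - Y_{k-1} X_{k-1} = τ_k e_k`. -/
inductive CRel (m : ℕ) [NeZero m] (τ : ZMod m → ℂ) :
    FreeAlgebra ℂ (CGen m) → FreeAlgebra ℂ (CGen m) → Prop
  | idem (k l : ZMod m) :
      CRel m τ (cgen (.e k) * cgen (.e l)) (if k = l then cgen (.e k) else 0)
  | sum_one : CRel m τ (∑ k : ZMod m, cgen (.e k)) 1
  | pathX (k : ZMod m) : CRel m τ (cgen (.e k) * cgen (.X k) * cgen (.e (k + 1))) (cgen (.X k))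
  | pathY (k : ZMod m) : CRel m τ (cgen (.e (k + 1)) * cgen (.Y k) * cgen (.e k)) (cgen (.Y k))
  | main (k : ZMod m) :
      CRel m τ (cgen (.X k) * cgen (.Y k) - cgen (.Y (k - 1)) * cgen (.X (k - 1)))
        (τ k • cgen (.e k))

/-- The deformed preprojective algebra `Π_τ(Q)` of the cyclic quiver. -/
noncomputable abbrev CPi (m : ℕ) [NeZero m] (τ : ZMod m → ℂ) := RingQuot (CRel m τ)

/-- Generators of `S_τ(Γ)` for `Γ = ℤ/mℤ`: the elements `x`, `y` and the group
elements `u_g`, `g ∈ Γ`. -/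
inductive SGen (m : ℕ) : Type
  | x | y | u (g : ZMod m)

noncomputable def sgen {m : ℕ} (a : SGen m) : FreeAlgebra ℂ (SGen m) := FreeAlgebra.ι ℂ a

/-- The idempotent `ε_k = (1/|Γ|) ∑_{g ∈ Γ} χ^k(g) g` of `ℂΓ`, where `χ(g) = ζ^g`. -/
noncomputable def epsS (m : ℕ) [NeZero m] (ζ : ℂ) (k : ZMod m) : FreeAlgebra ℂ (SGen m) :=
  ((m : ℂ))⁻¹ • ∑ g : ZMod m, ζ ^ (k * g).val • sgen (.u g)

/-- Defining relations of `S_τ(Γ)`: group algebra relations for `Γ`, the crossed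
product relations `g x = χ(g) x g`, `g y = χ(g)⁻¹ y g`, and `xy - yx = τ`, where
`τ = ∑_k τ_k ε_k ∈ ℂΓ`. -/
inductive SRel (m : ℕ) [NeZero m] (ζ : ℂ) (τ : ZMod m → ℂ) :
    FreeAlgebra ℂ (SGen m) → FreeAlgebra ℂ (SGen m) → Prop
  | grp (g h : ZMod m) : SRel m ζ τ (sgen (.u g) * sgen (.u h)) (sgen (.u (g + h)))
  | one : SRel m ζ τ (sgen (.u 0)) 1
  | ux (g : ZMod m) :
      SRel m ζ τ (sgen (.u g) * sgen .x) (ζ ^ g.val • (sgen .x * sgen (.u g)))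
  | uy (g : ZMod m) :
      SRel m ζ τ (sgen (.u g) * sgen .y) (ζ ^ (-g).val • (sgen .y * sgen (.u g)))
  | comm : SRel m ζ τ (sgen .x * sgen .y - sgen .y * sgen .x)
      (∑ k : ZMod m, τ k • epsS m ζ k)

/-- The algebra `S_τ(Γ)`, `Γ ≅ ℤ/mℤ`. -/
noncomputable abbrev SAlg (m : ℕ) [NeZero m] (ζ : ℂ) (τ : ZMod m → ℂ) := RingQuot (SRel m ζ τ)

/-!
Fourier transform on `ℤ/mℤ`: in any algebra, a representation `g ↦ u_g` of `ℤ/mℤ` and the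
family `ε_k = (1/m) ∑_g χ(k g) u_g` determine each other, with `u_g = ∑_k χ(-k g) ε_k`, the
`ε_k` form a complete family of orthogonal idempotents, and `u_g a = χ(d g) a u_g` for all `g`
exactly when `ε_k a = a ε_{k+d}` for all `k`. So in `S_τ(Γ)` the crossed product relations say
that `x` and `y` are sums of the arrows `X_k = ε_k x = ε_k x ε_{k+1}` and
`Y_k = ε_{k+1} y = ε_{k+1} y ε_k` of the cyclic quiver, and cutting `xy - yx = ∑ τ_k ε_k` by
`ε_k` gives the preprojective relation at the vertex `k`. Conversely, in `Π_τ(Q)` the vertex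
idempotents produce the group elements by the inverse transform.
-/

open Finset

lemma IsIdempotentElem.mul_mul_mul_of_mul_eq {R : Type*} [Semigroup R] {p q a : R}
    (hp : IsIdempotentElem p) (h : a * q = p * a) (b : R) : p * a * q * b = p * a * b := by
  rw [mul_assoc p, h, ← mul_assoc, hp.eq]

lemma IsIdempotentElem.mul_eq_of_mul_mul_eq {R : Type*} [Semigroup R] {p q a : R}
    (hp : IsIdempotentElem p) (h : p * a * q = a) : p * a = a := by
  rw [← h, ← mul_assoc, ← mul_assoc, hp.eq]

lemma IsIdempotentElem.mul_eq_of_mul_mul_eq' {R : Type*} [Semigroup R] {p q a : R}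
    (hq : IsIdempotentElem q) (h : p * a * q = a) : a * q = a := by
  rw [← h, mul_assoc, hq.eq]

lemma OrthogonalIdempotents.mul_sum_eq {ι R : Type*} [Fintype ι] [DecidableEq ι] [Semiring R]
    {e : ι → R} (he : OrthogonalIdempotents e) {σ : ι → ι} (hσ : σ.Injective) {a : ι → R}
    (ha : ∀ j, e (σ j) * a j = a j) (i : ι) : e (σ i) * ∑ j, a j = a i := by
  calc e (σ i) * ∑ j, a j = ∑ j, if i = j then a j else 0 := by
        rw [mul_sum]
        refine sum_congr rfl fun j _ => ?_
        rw [← ha j, ← mul_assoc, he.mul_eq]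
        by_cases h : i = j <;> simp [h, hσ.eq_iff]
    _ = a i := Fintype.sum_ite_eq i a

lemma OrthogonalIdempotents.sum_mul_eq {ι R : Type*} [Fintype ι] [DecidableEq ι] [Semiring R]
    {e : ι → R} (he : OrthogonalIdempotents e) {σ : ι → ι} (hσ : σ.Injective) {a : ι → R}
    (ha : ∀ j, a j * e (σ j) = a j) (i : ι) : (∑ j, a j) * e (σ i) = a i := by
  calc (∑ j, a j) * e (σ i) = ∑ j, if i = j then a j else 0 := by
        rw [sum_mul]
        refine sum_congr rfl fun j _ => ?_
        rw [← ha j, mul_assoc, he.mul_eq]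
        by_cases h : i = j <;> simp [h, hσ.eq_iff, Ne.symm]
    _ = a i := Fintype.sum_ite_eq i a

lemma OrthogonalIdempotents.sum_smul_mul {ι S R : Type*} [Fintype ι] [DecidableEq ι]
    [CommSemiring S] [Semiring R] [Algebra S R] {e : ι → R} (he : OrthogonalIdempotents e)
    (c : ι → S) (i : ι) : (∑ j, c j • e j) * e i = c i • e i := by
  simp [sum_mul, he.mul_eq]

lemma OrthogonalIdempotents.mul_sum_smul {ι S R : Type*} [Fintype ι] [DecidableEq ι]
    [CommSemiring S] [Semiring R] [Algebra S R] {e : ι → R} (he : OrthogonalIdempotents e)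
    (c : ι → S) (i : ι) : e i * ∑ j, c j • e j = c i • e i := by
  simp [mul_sum, he.mul_eq]

section Fourier

variable {K A : Type*} [Field K] [Ring A] [Algebra K A] {m : ℕ} [NeZero m]
  (ψ : AddChar (ZMod m) K)

lemma AddChar.IsPrimitive.inv_card_smul_sum_smul [NeZero (m : K)] (hψ : ψ.IsPrimitive)
    (c : ZMod m) (a : A) :
    (m : K)⁻¹ • ∑ g : ZMod m, ψ (c * g) • a = if c = 0 then a else 0 := by
  have hsum : ∑ g : ZMod m, ψ (c * g) = if c = 0 then (m : K) else 0 := by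
    simp_rw [mul_comm c]
    rw [AddChar.sum_mulShift c hψ, ZMod.card]
    split_ifs <;> simp
  rw [← sum_smul, hsum, smul_smul]
  split_ifs <;> simp [NeZero.ne]

noncomputable def fourierIdem (u : AddChar (ZMod m) A) (k : ZMod m) : A :=
  (m : K)⁻¹ • ∑ g, ψ (k * g) • u g

variable {ψ} {u : AddChar (ZMod m) A}

lemma fourierIdem_mul_apply (k h : ZMod m) :
    fourierIdem ψ u k * u h = ψ (-(k * h)) • fourierIdem ψ u k := by
  calc fourierIdem ψ u k * u h = (m : K)⁻¹ • ∑ g, ψ (k * g) • u (g + h) := by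
        simp only [fourierIdem, smul_mul_assoc, sum_mul, AddChar.map_add_eq_mul]
    _ = (m : K)⁻¹ • ∑ g, ψ (-(k * h)) • ψ (k * (g + h)) • u (g + h) := by
        congr 1
        refine sum_congr rfl fun g _ => ?_
        rw [smul_smul, ← AddChar.map_add_eq_mul]
        ring_nf
    _ = ψ (-(k * h)) • fourierIdem ψ u k := by
        rw [fourierIdem, ← Equiv.sum_comp (Equiv.addRight h) (fun g => ψ (k * g) • u g),
          ← smul_sum, smul_comm]
        rfl

lemma sum_smul_fourierIdem [NeZero (m : K)] (hψ : ψ.IsPrimitive) (g : ZMod m) :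
    ∑ k, ψ (-(k * g)) • fourierIdem ψ u k = u g := by
  have hterm : ∀ k h : ZMod m, ψ (-(k * g)) • ψ (k * h) • u h = ψ ((h - g) * k) • u h := by
    intro k h
    rw [smul_smul, ← AddChar.map_add_eq_mul]
    ring_nf
  simp only [fourierIdem, smul_sum, smul_comm (ψ _) ((m : K)⁻¹), hterm]
  rw [sum_comm]
  calc ∑ h, ∑ k, (m : K)⁻¹ • ψ ((h - g) * k) • u h = ∑ h, if h = g then u h else 0 :=
        sum_congr rfl fun h _ => by
          rw [← smul_sum, hψ.inv_card_smul_sum_smul]; simp only [sub_eq_zero]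
    _ = u g := Fintype.sum_ite_eq' g _

lemma fourierIdem_mul_fourierIdem [NeZero (m : K)] (hψ : ψ.IsPrimitive) (k l : ZMod m) :
    fourierIdem ψ u k * fourierIdem ψ u l = if k = l then fourierIdem ψ u k else 0 := by
  have hterm : ∀ g : ZMod m, fourierIdem ψ u k * (ψ (l * g) • u g)
      = ψ ((l - k) * g) • fourierIdem ψ u k := by
    intro g
    rw [mul_smul_comm, fourierIdem_mul_apply, smul_smul, ← AddChar.map_add_eq_mul]
    ring_nf
  rw [fourierIdem.eq_1 ψ u l, mul_smul_comm, mul_sum]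
  simp_rw [hterm, hψ.inv_card_smul_sum_smul, sub_eq_zero, eq_comm]

lemma completeOrthogonalIdempotents_fourierIdem [NeZero (m : K)] (hψ : ψ.IsPrimitive) :
    CompleteOrthogonalIdempotents (fourierIdem ψ u) where
  toOrthogonalIdempotents := OrthogonalIdempotents.iff_mul_eq.mpr (fourierIdem_mul_fourierIdem hψ)
  complete := by simpa using sum_smul_fourierIdem (u := u) hψ 0

lemma fourierIdem_mul_of_apply_mul {a : A} {d : ZMod m}
    (ha : ∀ g, u g * a = ψ (d * g) • (a * u g)) (k : ZMod m) :
    fourierIdem ψ u k * a = a * fourierIdem ψ u (k + d) := by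
  simp only [fourierIdem, smul_mul_assoc, mul_smul_comm, sum_mul, mul_sum, ha, smul_smul,
    ← AddChar.map_add_eq_mul, add_mul]

namespace CompleteOrthogonalIdempotents

variable {e : ZMod m → A} (he : CompleteOrthogonalIdempotents e)

variable (ψ) in
noncomputable def fourierChar : AddChar (ZMod m) A where
  toFun g := ∑ k, ψ (-(k * g)) • e k
  map_zero_eq_one' := by simpa using he.complete
  map_add_eq_mul' g h := by
    simp only [mul_sum, mul_smul_comm, he.sum_smul_mul, smul_smul,
      ← AddChar.map_add_eq_mul]
    refine sum_congr rfl fun k _ => ?_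
    ring_nf

lemma fourierChar_apply (g : ZMod m) : he.fourierChar ψ g = ∑ k, ψ (-(k * g)) • e k := rfl

lemma fourierIdem_fourierChar [NeZero (m : K)] (hψ : ψ.IsPrimitive) (k : ZMod m) :
    fourierIdem ψ (he.fourierChar ψ) k = e k := by
  have hterm : ∀ g l : ZMod m, ψ (k * g) • ψ (-(l * g)) • e l = ψ ((k - l) * g) • e l := by
    intro g l
    rw [smul_smul, ← AddChar.map_add_eq_mul]
    ring_nf
  simp only [fourierIdem, fourierChar_apply, smul_sum, hterm]
  rw [sum_comm]
  calc ∑ l, ∑ g, (m : K)⁻¹ • ψ ((k - l) * g) • e l = ∑ l, if k = l then e l else 0 :=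
        sum_congr rfl fun l _ => by
          rw [← smul_sum, hψ.inv_card_smul_sum_smul]; simp only [sub_eq_zero]
    _ = e k := Fintype.sum_ite_eq k _

lemma fourierChar_mul_of_mul {a : A} {d : ZMod m} (ha : ∀ k, e k * a = a * e (k + d))
    (g : ZMod m) : he.fourierChar ψ g * a = ψ (d * g) • (a * he.fourierChar ψ g) := by
  simp only [fourierChar_apply, sum_mul, mul_sum, smul_mul_assoc, mul_smul_comm, ha, smul_sum,
    smul_smul, ← AddChar.map_add_eq_mul]
  rw [← Equiv.sum_comp (Equiv.subRight d)]
  refine sum_congr rfl fun k _ => ?_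
  simp only [Equiv.subRight_apply, sub_add_cancel]
  ring_nf

end CompleteOrthogonalIdempotents

end Fourier

namespace CPi

variable {m : ℕ} [NeZero m] (τ : ZMod m → ℂ)

noncomputable def e (k : ZMod m) : CPi m τ := RingQuot.mkAlgHom ℂ (CRel m τ) (cgen (.e k))

noncomputable def X (k : ZMod m) : CPi m τ := RingQuot.mkAlgHom ℂ (CRel m τ) (cgen (.X k))

noncomputable def Y (k : ZMod m) : CPi m τ := RingQuot.mkAlgHom ℂ (CRel m τ) (cgen (.Y k))

lemma completeOrthogonalIdempotents_e : CompleteOrthogonalIdempotents (e τ) where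
  toOrthogonalIdempotents := OrthogonalIdempotents.iff_mul_eq.mpr fun k l => by
    simpa [e, apply_ite] using RingQuot.mkAlgHom_rel ℂ (CRel.idem (τ := τ) k l)
  complete := by simpa [e] using RingQuot.mkAlgHom_rel ℂ (CRel.sum_one (τ := τ))

lemma e_mul_X_mul_e (k : ZMod m) : e τ k * X τ k * e τ (k + 1) = X τ k := by
  simpa [e, X] using RingQuot.mkAlgHom_rel ℂ (CRel.pathX (τ := τ) k)

lemma e_mul_Y_mul_e (k : ZMod m) : e τ (k + 1) * Y τ k * e τ k = Y τ k := by
  simpa [e, Y] using RingQuot.mkAlgHom_rel ℂ (CRel.pathY (τ := τ) k)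

lemma X_mul_Y_sub_Y_mul_X (k : ZMod m) :
    X τ k * Y τ k - Y τ (k - 1) * X τ (k - 1) = τ k • e τ k := by
  simpa [e, X, Y] using RingQuot.mkAlgHom_rel ℂ (CRel.main (τ := τ) k)

lemma e_mul_X (k : ZMod m) : e τ k * X τ k = X τ k :=
  ((completeOrthogonalIdempotents_e τ).idem k).mul_eq_of_mul_mul_eq (e_mul_X_mul_e τ k)

lemma X_mul_e (k : ZMod m) : X τ k * e τ (k + 1) = X τ k :=
  ((completeOrthogonalIdempotents_e τ).idem _).mul_eq_of_mul_mul_eq' (e_mul_X_mul_e τ k)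

lemma e_mul_Y (k : ZMod m) : e τ (k + 1) * Y τ k = Y τ k :=
  ((completeOrthogonalIdempotents_e τ).idem _).mul_eq_of_mul_mul_eq (e_mul_Y_mul_e τ k)

lemma Y_mul_e (k : ZMod m) : Y τ k * e τ k = Y τ k :=
  ((completeOrthogonalIdempotents_e τ).idem k).mul_eq_of_mul_mul_eq' (e_mul_Y_mul_e τ k)

lemma e_mul_sum_X (k : ZMod m) : e τ k * ∑ l, X τ l = X τ k :=
  (completeOrthogonalIdempotents_e τ).mul_sum_eq Function.injective_id (e_mul_X τ) k

lemma sum_X_mul_e (k : ZMod m) : (∑ l, X τ l) * e τ (k + 1) = X τ k :=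
  (completeOrthogonalIdempotents_e τ).sum_mul_eq (add_left_injective 1) (X_mul_e τ) k

lemma e_mul_sum_Y (k : ZMod m) : e τ (k + 1) * ∑ l, Y τ l = Y τ k :=
  (completeOrthogonalIdempotents_e τ).mul_sum_eq (add_left_injective 1) (e_mul_Y τ) k

lemma sum_Y_mul_e (k : ZMod m) : (∑ l, Y τ l) * e τ k = Y τ k :=
  (completeOrthogonalIdempotents_e τ).sum_mul_eq Function.injective_id (Y_mul_e τ) k

lemma sum_X_mul_sum_Y_sub_sum_Y_mul_sum_X :
    (∑ k, X τ k) * (∑ k, Y τ k) - (∑ k, Y τ k) * (∑ k, X τ k) = ∑ k, τ k • e τ k := by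
  have hXY : (∑ k, X τ k) * (∑ k, Y τ k) = ∑ k, X τ k * Y τ k := by
    rw [sum_mul]
    refine sum_congr rfl fun k _ => ?_
    rw [← e_mul_sum_Y τ k, ← mul_assoc, X_mul_e]
  have hYX : (∑ k, Y τ k) * (∑ k, X τ k) = ∑ k, Y τ (k - 1) * X τ (k - 1) := by
    rw [sum_mul, ← Equiv.sum_comp (Equiv.subRight 1)]
    refine sum_congr rfl fun k _ => ?_
    rw [← e_mul_sum_X τ (k - 1), ← mul_assoc, Y_mul_e]
    rfl
  rw [hXY, hYX, ← sum_sub_distrib]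
  exact sum_congr rfl fun k _ => X_mul_Y_sub_Y_mul_X τ k

end CPi

namespace SAlg

variable {m : ℕ} [NeZero m] (ζ : ℂ) (τ : ZMod m → ℂ)

noncomputable def x : SAlg m ζ τ := RingQuot.mkAlgHom ℂ (SRel m ζ τ) (sgen .x)

noncomputable def y : SAlg m ζ τ := RingQuot.mkAlgHom ℂ (SRel m ζ τ) (sgen .y)

noncomputable def ε (k : ZMod m) : SAlg m ζ τ := RingQuot.mkAlgHom ℂ (SRel m ζ τ) (epsS m ζ k)

noncomputable def u : AddChar (ZMod m) (SAlg m ζ τ) where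
  toFun g := RingQuot.mkAlgHom ℂ (SRel m ζ τ) (sgen (.u g))
  map_zero_eq_one' := by simpa using RingQuot.mkAlgHom_rel ℂ (SRel.one (ζ := ζ) (τ := τ))
  map_add_eq_mul' g h := by
    simpa using (RingQuot.mkAlgHom_rel ℂ (SRel.grp (ζ := ζ) (τ := τ) g h)).symm

lemma u_apply (g : ZMod m) : u ζ τ g = RingQuot.mkAlgHom ℂ (SRel m ζ τ) (sgen (.u g)) := rfl

lemma u_mul_x (g : ZMod m) : u ζ τ g * x ζ τ = ζ ^ g.val • (x ζ τ * u ζ τ g) := by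
  simpa [x, u_apply] using RingQuot.mkAlgHom_rel ℂ (SRel.ux (ζ := ζ) (τ := τ) g)

lemma u_mul_y (g : ZMod m) : u ζ τ g * y ζ τ = ζ ^ (-g).val • (y ζ τ * u ζ τ g) := by
  simpa [y, u_apply] using RingQuot.mkAlgHom_rel ℂ (SRel.uy (ζ := ζ) (τ := τ) g)

lemma x_mul_y_sub_y_mul_x : x ζ τ * y ζ τ - y ζ τ * x ζ τ = ∑ k, τ k • ε ζ τ k := by
  simpa [x, y, ε] using RingQuot.mkAlgHom_rel ℂ (SRel.comm (ζ := ζ) (τ := τ))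

variable {ζ}

lemma ε_eq_fourierIdem (hζ : ζ ^ m = 1) : ε ζ τ = fourierIdem (AddChar.zmodChar m hζ) (u ζ τ) := by
  funext k
  simp only [ε, epsS, map_smul, map_sum, fourierIdem]
  rfl

lemma completeOrthogonalIdempotents_ε (hζ : IsPrimitiveRoot ζ m) :
    CompleteOrthogonalIdempotents (ε ζ τ) := by
  rw [ε_eq_fourierIdem τ hζ.pow_eq_one]
  exact completeOrthogonalIdempotents_fourierIdem
    (AddChar.zmodChar_primitive_of_primitive_root m hζ)

lemma sum_smul_ε (hζ : IsPrimitiveRoot ζ m) (g : ZMod m) :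
    ∑ k, ζ ^ (-(k * g)).val • ε ζ τ k = u ζ τ g := by
  rw [ε_eq_fourierIdem τ hζ.pow_eq_one]
  exact sum_smul_fourierIdem (AddChar.zmodChar_primitive_of_primitive_root m hζ) g

lemma ε_mul_x (hζ : ζ ^ m = 1) (k : ZMod m) : ε ζ τ k * x ζ τ = x ζ τ * ε ζ τ (k + 1) := by
  rw [ε_eq_fourierIdem τ hζ]
  exact fourierIdem_mul_of_apply_mul (fun g => by rw [one_mul]; exact u_mul_x ζ τ g) k

lemma ε_add_one_mul_y (hζ : ζ ^ m = 1) (k : ZMod m) :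
    ε ζ τ (k + 1) * y ζ τ = y ζ τ * ε ζ τ k := by
  rw [ε_eq_fourierIdem τ hζ]
  have h := fourierIdem_mul_of_apply_mul (ψ := AddChar.zmodChar m hζ) (d := -1)
    (fun g => by rw [neg_one_mul]; exact u_mul_y ζ τ g) (k + 1)
  rwa [add_neg_cancel_right] at h

variable (ζ) in
noncomputable def X (k : ZMod m) : SAlg m ζ τ := ε ζ τ k * x ζ τ

variable (ζ) in
noncomputable def Y (k : ZMod m) : SAlg m ζ τ := ε ζ τ (k + 1) * y ζ τ

lemma ε_mul_X_mul_ε (hζ : IsPrimitiveRoot ζ m) (k : ZMod m) :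
    ε ζ τ k * X ζ τ k * ε ζ τ (k + 1) = X ζ τ k := by
  have hidem := (completeOrthogonalIdempotents_ε τ hζ).idem
  rw [X, ← mul_assoc, (hidem k).eq, mul_assoc, ← ε_mul_x τ hζ.pow_eq_one, ← mul_assoc, (hidem k).eq]

lemma ε_mul_Y_mul_ε (hζ : IsPrimitiveRoot ζ m) (k : ZMod m) :
    ε ζ τ (k + 1) * Y ζ τ k * ε ζ τ k = Y ζ τ k := by
  have hidem := (completeOrthogonalIdempotents_ε τ hζ).idem
  rw [Y, ← mul_assoc, (hidem _).eq, mul_assoc, ← ε_add_one_mul_y τ hζ.pow_eq_one, ← mul_assoc,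
    (hidem _).eq]

lemma X_mul_Y_sub_Y_mul_X (hζ : IsPrimitiveRoot ζ m) (k : ZMod m) :
    X ζ τ k * Y ζ τ k - Y ζ τ (k - 1) * X ζ τ (k - 1) = τ k • ε ζ τ k := by
  have he := completeOrthogonalIdempotents_ε τ hζ
  have hx : x ζ τ * ε ζ τ (k + 1) = ε ζ τ k * x ζ τ := (ε_mul_x τ hζ.pow_eq_one k).symm
  have hy : y ζ τ * ε ζ τ (k - 1) = ε ζ τ k * y ζ τ := by
    rw [← ε_add_one_mul_y τ hζ.pow_eq_one, sub_add_cancel]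
  rw [X, Y, X, Y, sub_add_cancel, ← mul_assoc, ← mul_assoc, (he.idem k).mul_mul_mul_of_mul_eq hx,
    (he.idem k).mul_mul_mul_of_mul_eq hy, mul_assoc, mul_assoc, ← mul_sub,
    x_mul_y_sub_y_mul_x, he.mul_sum_smul]

lemma sum_X (hζ : IsPrimitiveRoot ζ m) : ∑ k, X ζ τ k = x ζ τ := by
  simp only [X, ← sum_mul, (completeOrthogonalIdempotents_ε τ hζ).complete, one_mul]

lemma sum_Y (hζ : IsPrimitiveRoot ζ m) : ∑ k, Y ζ τ k = y ζ τ := by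
  rw [← one_mul (y ζ τ), ← (completeOrthogonalIdempotents_ε τ hζ).complete, sum_mul,
    ← Equiv.sum_comp (Equiv.addRight 1) (fun k => ε ζ τ k * y ζ τ)]
  rfl

noncomputable def genToCPi (hζ : ζ ^ m = 1) : SGen m → CPi m τ
  | .x => ∑ k, CPi.X τ k
  | .y => ∑ k, CPi.Y τ k
  | .u g => (CPi.completeOrthogonalIdempotents_e τ).fourierChar (AddChar.zmodChar m hζ) g

lemma lift_genToCPi_epsS (hζ : IsPrimitiveRoot ζ m) (k : ZMod m) :
    FreeAlgebra.lift ℂ (genToCPi τ hζ.pow_eq_one) (epsS m ζ k) = CPi.e τ k := by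
  rw [← (CPi.completeOrthogonalIdempotents_e τ).fourierIdem_fourierChar
    (AddChar.zmodChar_primitive_of_primitive_root m hζ) k]
  simp only [epsS, sgen, map_smul, map_sum, FreeAlgebra.lift_ι_apply, genToCPi, fourierIdem]
  rfl

lemma lift_genToCPi_rel (hζ : IsPrimitiveRoot ζ m) ⦃a b : FreeAlgebra ℂ (SGen m)⦄
    (h : SRel m ζ τ a b) :
    FreeAlgebra.lift ℂ (genToCPi τ hζ.pow_eq_one) a =
      FreeAlgebra.lift ℂ (genToCPi τ hζ.pow_eq_one) b := by
  have he := CPi.completeOrthogonalIdempotents_e τ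
  cases h with
  | grp g h => simpa [sgen, genToCPi] using (AddChar.map_add_eq_mul _ g h).symm
  | one => simp [sgen, genToCPi]
  | ux g =>
    simpa [sgen, genToCPi, AddChar.zmodChar_apply] using he.fourierChar_mul_of_mul
      (ψ := AddChar.zmodChar m hζ.pow_eq_one) (d := 1)
      (fun k => by rw [CPi.e_mul_sum_X, CPi.sum_X_mul_e]) g
  | uy g =>
    simpa [sgen, genToCPi, AddChar.zmodChar_apply] using he.fourierChar_mul_of_mul
      (ψ := AddChar.zmodChar m hζ.pow_eq_one) (d := -1)
      (fun k => by rw [← sub_eq_add_neg, CPi.sum_Y_mul_e, ← CPi.e_mul_sum_Y, sub_add_cancel]) g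
  | comm =>
    simp only [sgen, map_sub, map_mul, map_sum, map_smul, FreeAlgebra.lift_ι_apply, genToCPi,
      lift_genToCPi_epsS τ hζ]
    exact CPi.sum_X_mul_sum_Y_sub_sum_Y_mul_sum_X τ

noncomputable def toCPi (hζ : IsPrimitiveRoot ζ m) : SAlg m ζ τ →ₐ[ℂ] CPi m τ :=
  RingQuot.liftAlgHom ℂ ⟨FreeAlgebra.lift ℂ (genToCPi τ hζ.pow_eq_one), lift_genToCPi_rel τ hζ⟩

variable (hζ : IsPrimitiveRoot ζ m)

lemma toCPi_ε (k : ZMod m) : toCPi τ hζ (ε ζ τ k) = CPi.e τ k := by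
  rw [toCPi, ε, RingQuot.liftAlgHom_mkAlgHom_apply, lift_genToCPi_epsS τ hζ]

lemma toCPi_x : toCPi τ hζ (x ζ τ) = ∑ k, CPi.X τ k := by
  rw [toCPi, x, RingQuot.liftAlgHom_mkAlgHom_apply, sgen, FreeAlgebra.lift_ι_apply, genToCPi]

lemma toCPi_y : toCPi τ hζ (y ζ τ) = ∑ k, CPi.Y τ k := by
  rw [toCPi, y, RingQuot.liftAlgHom_mkAlgHom_apply, sgen, FreeAlgebra.lift_ι_apply, genToCPi]

lemma toCPi_u (g : ZMod m) :
    toCPi τ hζ (u ζ τ g) =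
      (CPi.completeOrthogonalIdempotents_e τ).fourierChar (AddChar.zmodChar m hζ.pow_eq_one) g := by
  rw [toCPi, u_apply, RingQuot.liftAlgHom_mkAlgHom_apply, sgen, FreeAlgebra.lift_ι_apply, genToCPi]

end SAlg

namespace CPi

variable {m : ℕ} [NeZero m] (ζ : ℂ) (τ : ZMod m → ℂ)

noncomputable def genToSAlg : CGen m → SAlg m ζ τ
  | .e k => SAlg.ε ζ τ k
  | .X k => SAlg.X ζ τ k
  | .Y k => SAlg.Y ζ τ k

variable {ζ}

lemma lift_genToSAlg_rel (hζ : IsPrimitiveRoot ζ m) ⦃a b : FreeAlgebra ℂ (CGen m)⦄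
    (h : CRel m τ a b) :
    FreeAlgebra.lift ℂ (genToSAlg ζ τ) a = FreeAlgebra.lift ℂ (genToSAlg ζ τ) b := by
  have he := SAlg.completeOrthogonalIdempotents_ε τ hζ
  cases h with
  | idem k l => simpa [cgen, genToSAlg, apply_ite] using he.mul_eq k l
  | sum_one => simpa [cgen, genToSAlg] using he.complete
  | pathX k => simpa [cgen, genToSAlg] using SAlg.ε_mul_X_mul_ε τ hζ k
  | pathY k => simpa [cgen, genToSAlg] using SAlg.ε_mul_Y_mul_ε τ hζ k
  | main k => simpa [cgen, genToSAlg] using SAlg.X_mul_Y_sub_Y_mul_X τ hζ k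

noncomputable def toSAlg (hζ : IsPrimitiveRoot ζ m) : CPi m τ →ₐ[ℂ] SAlg m ζ τ :=
  RingQuot.liftAlgHom ℂ ⟨FreeAlgebra.lift ℂ (genToSAlg ζ τ), lift_genToSAlg_rel τ hζ⟩

variable (hζ : IsPrimitiveRoot ζ m)

lemma toSAlg_e (k : ZMod m) : toSAlg τ hζ (e τ k) = SAlg.ε ζ τ k := by
  rw [toSAlg, e, RingQuot.liftAlgHom_mkAlgHom_apply, cgen, FreeAlgebra.lift_ι_apply, genToSAlg]

lemma toSAlg_X (k : ZMod m) : toSAlg τ hζ (X τ k) = SAlg.X ζ τ k := by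
  rw [toSAlg, X, RingQuot.liftAlgHom_mkAlgHom_apply, cgen, FreeAlgebra.lift_ι_apply, genToSAlg]

lemma toSAlg_Y (k : ZMod m) : toSAlg τ hζ (Y τ k) = SAlg.Y ζ τ k := by
  rw [toSAlg, Y, RingQuot.liftAlgHom_mkAlgHom_apply, cgen, FreeAlgebra.lift_ι_apply, genToSAlg]

end CPi

section Isomorphism

variable {m : ℕ} [NeZero m] {ζ : ℂ} (τ : ZMod m → ℂ) (hζ : IsPrimitiveRoot ζ m)

lemma SAlg.toCPi_comp_toSAlg : (SAlg.toCPi τ hζ).comp (CPi.toSAlg τ hζ) = AlgHom.id ℂ _ := by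
  ext (k | k | k)
  · show SAlg.toCPi τ hζ (CPi.toSAlg τ hζ (CPi.X τ k)) = CPi.X τ k
    rw [CPi.toSAlg_X, SAlg.X, map_mul, SAlg.toCPi_ε, SAlg.toCPi_x, CPi.e_mul_sum_X]
  · show SAlg.toCPi τ hζ (CPi.toSAlg τ hζ (CPi.Y τ k)) = CPi.Y τ k
    rw [CPi.toSAlg_Y, SAlg.Y, map_mul, SAlg.toCPi_ε, SAlg.toCPi_y, CPi.e_mul_sum_Y]
  · show SAlg.toCPi τ hζ (CPi.toSAlg τ hζ (CPi.e τ k)) = CPi.e τ k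
    rw [CPi.toSAlg_e, SAlg.toCPi_ε]

lemma CPi.toSAlg_comp_toCPi : (CPi.toSAlg τ hζ).comp (SAlg.toCPi τ hζ) = AlgHom.id ℂ _ := by
  ext (_ | _ | g)
  · show CPi.toSAlg τ hζ (SAlg.toCPi τ hζ (SAlg.x ζ τ)) = SAlg.x ζ τ
    rw [SAlg.toCPi_x, map_sum]
    simp only [CPi.toSAlg_X, SAlg.sum_X τ hζ]
  · show CPi.toSAlg τ hζ (SAlg.toCPi τ hζ (SAlg.y ζ τ)) = SAlg.y ζ τ
    rw [SAlg.toCPi_y, map_sum]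
    simp only [CPi.toSAlg_Y, SAlg.sum_Y τ hζ]
  · show CPi.toSAlg τ hζ (SAlg.toCPi τ hζ (SAlg.u ζ τ g)) = SAlg.u ζ τ g
    rw [SAlg.toCPi_u, CompleteOrthogonalIdempotents.fourierChar_apply, map_sum]
    simp only [map_smul, CPi.toSAlg_e, AddChar.zmodChar_apply, SAlg.sum_smul_ε τ hζ]

end Isomorphism

/-- The assignment `ε_i ↦ e_i`, `x ↦ ∑ X_i`, `y ↦ ∑ Y_i` extends to an algebra
isomorphism `S_τ(Γ) ≃ Π_τ(Q)`. -/
theorem stmt13 (m : ℕ) [NeZero m] (ζ : ℂ) (hζ : IsPrimitiveRoot ζ m) (τ : ZMod m → ℂ) :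
    ∃ f : SAlg m ζ τ ≃ₐ[ℂ] CPi m τ,
      (∀ k : ZMod m,
        f (RingQuot.mkAlgHom ℂ (SRel m ζ τ) (epsS m ζ k)) =
          RingQuot.mkAlgHom ℂ (CRel m τ) (cgen (.e k))) ∧
      f (RingQuot.mkAlgHom ℂ (SRel m ζ τ) (sgen .x)) =
        ∑ k : ZMod m, RingQuot.mkAlgHom ℂ (CRel m τ) (cgen (.X k)) ∧
      f (RingQuot.mkAlgHom ℂ (SRel m ζ τ) (sgen .y)) =
        ∑ k : ZMod m, RingQuot.mkAlgHom ℂ (CRel m τ) (cgen (.Y k)) :=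
  ⟨AlgEquiv.ofAlgHom (SAlg.toCPi τ hζ) (CPi.toSAlg τ hζ) (SAlg.toCPi_comp_toSAlg τ hζ)
      (CPi.toSAlg_comp_toCPi τ hζ),
    SAlg.toCPi_ε τ hζ, SAlg.toCPi_x τ hζ, SAlg.toCPi_y τ hζ⟩
end

section
/- Let τ ∈ C^m be regular (τ·β ≠ 0 for all roots β of the affine root system of type Ã_m), so that Π_τ(Q) is a simple ring with no nonzero finite-dimensional modules. Let λ = (λ_∞, τ) and let V be a Π_λ(Q_∞)-module of dimension vector α = (1, n_0, ..., n_{m−1}) (so dim V e_∞ = 1). Then V is a simple module. -/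
/-- Generators of the deformed preprojective algebra `Π_λ(Q_∞)` of the framed cyclic
quiver: the cyclic quiver on vertices `ℤ/mℤ` together with an extra vertex `∞` and
an extra arrow `v : 0 → ∞` (with reverse `w`). -/
inductive FGen (m : ℕ) : Type
  | X (k : ZMod m) | Y (k : ZMod m) | e (k : ZMod m) | v | w | einf

noncomputable def fgen {m : ℕ} (a : FGen m) : FreeAlgebra ℂ (FGen m) := FreeAlgebra.ι ℂ a

/-- Defining relations of `Π_λ(Q_∞)`, `λ = (λ_∞, τ)`: orthogonal idempotents
`e_∞, e_0, …, e_{m-1}` summing to `1`, the path relations, and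
`vw = λ_∞ e_∞`, `X_0 Y_0 - Y_{m-1} X_{m-1} - wv = τ_0 e_0`,
`X_k Y_k - Y_{k-1} X_{k-1} = τ_k e_k` for `k ≠ 0`. -/
inductive FRel (m : ℕ) [NeZero m] (laminf : ℂ) (τ : ZMod m → ℂ) :
    FreeAlgebra ℂ (FGen m) → FreeAlgebra ℂ (FGen m) → Prop
  | idem (k l : ZMod m) :
      FRel m laminf τ (fgen (.e k) * fgen (.e l)) (if k = l then fgen (.e k) else 0)
  | idem_inf : FRel m laminf τ (fgen .einf * fgen .einf) (fgen .einf)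
  | orth₁ (k : ZMod m) : FRel m laminf τ (fgen (.e k) * fgen .einf) 0
  | orth₂ (k : ZMod m) : FRel m laminf τ (fgen .einf * fgen (.e k)) 0
  | sum_one : FRel m laminf τ (fgen .einf + ∑ k : ZMod m, fgen (.e k)) 1
  | pathX (k : ZMod m) :
      FRel m laminf τ (fgen (.e k) * fgen (.X k) * fgen (.e (k + 1))) (fgen (.X k))
  | pathY (k : ZMod m) :
      FRel m laminf τ (fgen (.e (k + 1)) * fgen (.Y k) * fgen (.e k)) (fgen (.Y k))
  | pathv : FRel m laminf τ (fgen .einf * fgen .v * fgen (.e 0)) (fgen .v)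
  | pathw : FRel m laminf τ (fgen (.e 0) * fgen .w * fgen .einf) (fgen .w)
  | vw : FRel m laminf τ (fgen .v * fgen .w) (laminf • fgen .einf)
  | main (k : ZMod m) :
      FRel m laminf τ
        (fgen (.X k) * fgen (.Y k) - fgen (.Y (k - 1)) * fgen (.X (k - 1)) -
          (if k = 0 then fgen .w * fgen .v else 0))
        (τ k • fgen (.e k))

/-- The deformed preprojective algebra `Π_λ(Q_∞)` of the framed cyclic quiver. -/
noncomputable abbrev FPi (m : ℕ) [NeZero m] (laminf : ℂ) (τ : ZMod m → ℂ) :=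
  RingQuot (FRel m laminf τ)

open Module

/-!
A submodule `p` of `V` either lies in the kernel of `e_∞`, and is then a finite-dimensional
module over `Π_λ / ⟨e_∞⟩ ≅ Π_τ(Q)`, hence zero; or it contains a vector not killed by `e_∞`,
and since `e_∞ V` is a line, `p ⊇ e_∞ V`, so that `V ⧸ p` is a `Π_τ(Q)`-module and `p = V`.
-/

universe u

theorem nontrivial_of_finrank_span_range_smul_eq_one {K A V : Type*} [Field K]
    [AddCommGroup V] [Module K V] [SMul A V] {e : A}
    (he : finrank K (Submodule.span K (Set.range fun x : V => e • x)) = 1) : Nontrivial V := by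
  by_contra hV
  have : Subsingleton V := not_nontrivial_iff_subsingleton.mp hV
  rw [Submodule.span_eq_bot.mpr fun x _ => Subsingleton.elim x 0, finrank_bot] at he
  exact zero_ne_one he

section Annihilated

variable (K : Type*) {A : Type*} [Field K] [Ring A] [Algebra K A] (e : A)

def NoNonzeroFinDimModuleKilledBy : Prop :=
  ∀ (W : Type u) [AddCommGroup W] [Module K W] [Module A W] [IsScalarTower K A W],
    FiniteDimensional K W → (∀ w : W, e • w = 0) → Subsingleton W

variable {K e} {V : Type u} [AddCommGroup V] [Module K V] [Module A V] [IsScalarTower K A V]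
  [FiniteDimensional K V]

theorem Submodule.eq_bot_of_forall_smul_eq_zero (hK : NoNonzeroFinDimModuleKilledBy.{u} K e)
    {p : Submodule A V} (hp : ∀ x ∈ p, e • x = 0) : p = ⊥ :=
  have : FiniteDimensional K p := inferInstanceAs (FiniteDimensional K (p.restrictScalars K))
  have := hK p inferInstance fun w => Subtype.ext (hp w w.2)
  Submodule.eq_bot_of_subsingleton

theorem Submodule.eq_top_of_forall_smul_mem (hK : NoNonzeroFinDimModuleKilledBy.{u} K e)
    {p : Submodule A V} (hp : ∀ y : V, e • y ∈ p) : p = ⊤ := by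
  have : FiniteDimensional K (V ⧸ p) :=
    .of_surjective (p.mkQ.restrictScalars K) p.mkQ_surjective
  refine Submodule.Quotient.subsingleton_iff.mp (hK (V ⧸ p) inferInstance ?_)
  rintro ⟨y⟩
  exact (Submodule.Quotient.mk_eq_zero p).mpr (hp y)

theorem Submodule.forall_smul_mem_of_finrank_span_range_smul_eq_one
    (he : finrank K (Submodule.span K (Set.range fun x : V => e • x)) = 1)
    {p : Submodule A V} {x : V} (hxp : x ∈ p) (hx : e • x ≠ 0) (y : V) : e • y ∈ p := by
  set S := Submodule.span K (Set.range fun x : V => e • x)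
  have hlineS : Submodule.span K {e • x} = S :=
    Submodule.eq_of_le_of_finrank_eq
      (Submodule.span_le.mpr (Set.singleton_subset_iff.mpr (Submodule.subset_span ⟨x, rfl⟩)))
      (by rw [finrank_span_singleton hx, he])
  have hyS : e • y ∈ Submodule.span K {e • x} := hlineS ▸ Submodule.subset_span ⟨y, rfl⟩
  obtain ⟨c, hc⟩ := Submodule.mem_span_singleton.mp hyS
  exact hc ▸ p.smul_of_tower_mem c (p.smul_mem e hxp)

theorem isSimpleModule_of_finrank_span_range_smul_eq_one
    (hK : NoNonzeroFinDimModuleKilledBy.{u} K e)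
    (he : finrank K (Submodule.span K (Set.range fun x : V => e • x)) = 1) :
    IsSimpleModule A V := by
  have := nontrivial_of_finrank_span_range_smul_eq_one he
  refine { eq_bot_or_eq_top := fun p => ?_ }
  by_cases hp : ∀ x ∈ p, e • x = 0
  · exact .inl (p.eq_bot_of_forall_smul_eq_zero hK hp)
  · push Not at hp
    obtain ⟨x, hxp, hx⟩ := hp
    exact .inr (p.eq_top_of_forall_smul_mem hK
      (p.forall_smul_mem_of_finrank_span_range_smul_eq_one he hxp hx))

end Annihilated

theorem stmt16_general (m : ℕ) [NeZero m] (laminf : ℂ) (τ : ZMod m → ℂ)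
    (hreg : ∀ (W : Type) [AddCommGroup W] [Module ℂ W] [Module (FPi m laminf τ) W]
      [IsScalarTower ℂ (FPi m laminf τ) W], FiniteDimensional ℂ W →
      (∀ w : W, RingQuot.mkAlgHom ℂ (FRel m laminf τ) (fgen .einf) • w = 0) →
      Subsingleton W)
    (V : Type) [AddCommGroup V] [Module ℂ V] [Module (FPi m laminf τ) V]
    [IsScalarTower ℂ (FPi m laminf τ) V] [FiniteDimensional ℂ V]
    (hinf : finrank ℂ (Submodule.span ℂ
      (Set.range fun x : V => RingQuot.mkAlgHom ℂ (FRel m laminf τ) (fgen .einf) • x)) = 1) :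
    IsSimpleModule (FPi m laminf τ) V :=
  isSimpleModule_of_finrank_span_range_smul_eq_one hreg hinf

/-- Let `τ` be such that the quotient `Π_λ/⟨e_∞⟩ ≅ Π_τ(Q)` admits no nonzero
finite-dimensional modules (which holds when `τ` is regular, `Π_τ(Q)` being then a
simple ring). If `V` is a `Π_λ(Q_∞)`-module of dimension vector `α = (1, n_0, …, n_{m-1})`
(so `dim (e_∞ V) = 1`), then `V` is a simple module. -/
theorem stmt16 (m : ℕ) [NeZero m] (laminf : ℂ) (τ : ZMod m → ℂ)
    (hreg : ∀ (W : Type) [AddCommGroup W] [Module ℂ W] [Module (FPi m laminf τ) W]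
      [IsScalarTower ℂ (FPi m laminf τ) W], FiniteDimensional ℂ W →
      (∀ w : W, RingQuot.mkAlgHom ℂ (FRel m laminf τ) (fgen .einf) • w = 0) →
      Subsingleton W)
    (nvec : ZMod m → ℕ)
    (V : Type) [AddCommGroup V] [Module ℂ V] [Module (FPi m laminf τ) V]
    [IsScalarTower ℂ (FPi m laminf τ) V] [FiniteDimensional ℂ V]
    (hinf : finrank ℂ (Submodule.span ℂ
      (Set.range fun x : V => RingQuot.mkAlgHom ℂ (FRel m laminf τ) (fgen .einf) • x)) = 1)
    (hdim : ∀ k : ZMod m, finrank ℂ (Submodule.span ℂ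
      (Set.range fun x : V => RingQuot.mkAlgHom ℂ (FRel m laminf τ) (fgen (.e k)) • x)) =
        nvec k) :
    IsSimpleModule (FPi m laminf τ) V :=
  stmt16_general m laminf τ hreg V hinf
end

section
/- For matrices X̄, Ȳ ∈ End(C^n), v̄ ∈ Hom(C, C^n), w̄ ∈ Hom(C^n, C) satisfying [X̄, Ȳ] + Id + v̄ w̄ = 0, the stabilizer in GL(n, C) of the quadruple (X̄, Ȳ, v̄, w̄) under the action g·(X̄,Ȳ,v̄,w̄) = (gX̄g^{−1}, gȲg^{−1}, gv̄, w̄g^{−1}) is trivial, i.e., GL(n,C) acts freely on the space of such quadruples. -/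
/-!
If `g` stabilises the quadruple, then `M = g⁻¹ - 1` commutes with `X̄` and `Ȳ`, and `w̄ M = 0`.
Hence the image of `M` is invariant under `X̄` and `Ȳ`, and since `v̄ w̄` vanishes on it, `[X̄, Ȳ]`
acts there as `-Id`. A commutator has trace zero while `-Id` has trace minus the dimension, so
in characteristic zero the image of `M` is zero.
-/

theorem Module.finrank_eq_zero_of_mul_sub_mul_eq_one {R M : Type*} [CommRing R] [CharZero R]
    [AddCommGroup M] [Module R M] [Module.Free R M] [Module.Finite R M]
    {A B : Module.End R M} (h : A * B - B * A = 1) : Module.finrank R M = 0 := by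
  have htrace := congrArg (LinearMap.trace R M) h
  rw [map_sub, LinearMap.trace_mul_comm, sub_self, LinearMap.trace_one] at htrace
  exact_mod_cast htrace.symm

namespace Module.End

theorem mapsTo_range_of_commute {R V : Type*} [Semiring R] [AddCommMonoid V] [Module R V]
    {M A : Module.End R V} (h : Commute M A) :
    Set.MapsTo A (LinearMap.range M) (LinearMap.range M) := by
  rintro _ ⟨u, rfl⟩
  exact ⟨A u, congr($h.eq u)⟩

theorem eq_zero_of_commutator_eq_neg_one_on_range {K V : Type*} [Field K] [CharZero K]
    [AddCommGroup V] [Module K V] [FiniteDimensional K V] {X Y M : Module.End K V}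
    (hX : Commute M X) (hY : Commute M Y) (h : (X * Y - Y * X + 1) * M = 0) : M = 0 := by
  set Xr := X.restrict (mapsTo_range_of_commute hX)
  set Yr := Y.restrict (mapsTo_range_of_commute hY)
  have hcomm : Yr * Xr - Xr * Yr = 1 := by
    ext ⟨_, u, rfl⟩
    have hu : X (Y (M u)) - Y (X (M u)) + M u = 0 := congr($h u)
    show Y (X (M u)) - X (Y (M u)) = M u
    rw [← sub_eq_zero, ← neg_eq_zero, ← hu]
    abel
  have hrange := Module.finrank_eq_zero_of_mul_sub_mul_eq_one hcomm
  rwa [Submodule.finrank_eq_zero, LinearMap.range_eq_bot] at hrange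

end Module.End

namespace Matrix

variable {n : Type*} [Fintype n] [DecidableEq n]

theorem eq_zero_of_commutator_eq_neg_one_on_range {K : Type*} [Field K] [CharZero K]
    {X Y M : Matrix n n K} (hX : Commute M X) (hY : Commute M Y) (h : (X * Y - Y * X + 1) * M = 0) : M = 0 := by
  apply toLinAlgEquiv'.injective
  rw [map_zero]
  refine Module.End.eq_zero_of_commutator_eq_neg_one_on_range (hX.map toLinAlgEquiv')
    (hY.map toLinAlgEquiv') ?_
  simpa only [map_mul, map_add, map_sub, map_one, map_zero] using congrArg toLinAlgEquiv' h

theorem commutator_add_one_mul_eq_zero_of_vecMul_eq_zero {R : Type*} [Ring R]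
    {X Y M : Matrix n n R} {v w : n → R}
    (h : X * Y - Y * X + 1 + vecMulVec v w = 0) (hw : w ᵥ* M = 0) :
    (X * Y - Y * X + 1) * M = 0 := by
  rw [eq_neg_of_add_eq_zero_left h, neg_mul, vecMulVec_mul, hw, vecMulVec_zero, neg_zero]

end Matrix

open Matrix

theorem stmt18_general (n : ℕ) (X Y : Matrix (Fin n) (Fin n) ℂ) (v w : Fin n → ℂ)
    (h : X * Y - Y * X + 1 + Matrix.vecMulVec v w = 0)
    (g : GL (Fin n) ℂ)
    (hX : (g : Matrix (Fin n) (Fin n) ℂ) * X * (↑g⁻¹ : Matrix (Fin n) (Fin n) ℂ) = X)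
    (hY : (g : Matrix (Fin n) (Fin n) ℂ) * Y * (↑g⁻¹ : Matrix (Fin n) (Fin n) ℂ) = Y)
    (hw : Matrix.vecMul w (↑g⁻¹ : Matrix (Fin n) (Fin n) ℂ) = w) :
    g = 1 := by
  have hgX : Commute (↑g⁻¹ : Matrix (Fin n) (Fin n) ℂ) X :=
    .units_inv_left ((Units.mul_inv_eq_iff_eq_mul g).mp hX)
  have hgY : Commute (↑g⁻¹ : Matrix (Fin n) (Fin n) ℂ) Y :=
    .units_inv_left ((Units.mul_inv_eq_iff_eq_mul g).mp hY)
  have hg : (↑g⁻¹ : Matrix (Fin n) (Fin n) ℂ) - 1 = 0 :=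
    eq_zero_of_commutator_eq_neg_one_on_range (hgX.sub_left (.one_left X))
      (hgY.sub_left (.one_left Y))
      (commutator_add_one_mul_eq_zero_of_vecMul_eq_zero h
        (by rw [vecMul_sub, hw, vecMul_one, sub_self]))
  exact inv_eq_one.mp (Units.ext (sub_eq_zero.mp hg))

/-- `GL(n,ℂ)` acts freely on the space of quadruples `(X̄, Ȳ, v̄, w̄)` with
`[X̄,Ȳ] + Id + v̄w̄ = 0`: any `g` stabilizing such a quadruple (i.e. with
`gX̄g⁻¹ = X̄`, `gȲg⁻¹ = Ȳ`, `gv̄ = v̄`, `w̄g⁻¹ = w̄`) is the identity. -/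
theorem stmt18 (n : ℕ) (X Y : Matrix (Fin n) (Fin n) ℂ) (v w : Fin n → ℂ)
    (h : X * Y - Y * X + 1 + Matrix.vecMulVec v w = 0)
    (g : GL (Fin n) ℂ)
    (hX : (g : Matrix (Fin n) (Fin n) ℂ) * X * (↑g⁻¹ : Matrix (Fin n) (Fin n) ℂ) = X)
    (hY : (g : Matrix (Fin n) (Fin n) ℂ) * Y * (↑g⁻¹ : Matrix (Fin n) (Fin n) ℂ) = Y)
    (hv : Matrix.mulVec (g : Matrix (Fin n) (Fin n) ℂ) v = v)
    (hw : Matrix.vecMul w (↑g⁻¹ : Matrix (Fin n) (Fin n) ℂ) = w) :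
    g = 1 :=
  stmt18_general n X Y v w h g hX hY hw
end
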